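/- arXiv:2003.03834 — 4 statements merged into one kernel-verified Lean document; each statement's English description precedes it below -/
import Mathlib

section
/- Let $\lambda>0$, $\xi=\sqrt{2\lambda}$, and for $\phi\ge0$ define $h_\phi(x)=|x|+\phi\big(\tfrac{|1-x|+|1+x|}{2}-|x|\big)$ and $H_\phi(x)=\int_{\mathbb{R}}h_\phi(y)\,\frac{\xi}{2}e^{-\xi|x-y|}\,dy$. Then: (i) $h_\phi$ is convex on $\mathbb{R}$ if and only if $\phi\le1$; (ii) the following are equivalent: $H_\phi$ is convex on $\mathbb{R}$; $H_\phi(x)\ge h_\phi(x)$ for all $x\in\mathbb{R}$; $\phi\le\frac{1}{1-e^{-\xi}}$. In particular, for $1<\phi\le\frac{1}{1-e^{-\xi}}$ the function $H_\phi$ is convex even though $h_\phi$ is not convex. -/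
open MeasureTheory ProbabilityTheory Real Set Filter
open scoped ENNReal NNReal

noncomputable section

namespace PoissonOS

/-- `h_φ(x) = |x| + φ ((|1-x| + |1+x|)/2 - |x|)`. -/
def hphi (ph x : ℝ) : ℝ := |x| + ph * ((|1 - x| + |1 + x|) / 2 - |x|)

/-- `H_φ(x) = ∫ h_φ(y) (ξ/2) e^{-ξ|x-y|} dy`, the resolvent of `h_φ`. -/
def Hphi (xi ph x : ℝ) : ℝ := ∫ y : ℝ, hphi ph y * (xi / 2 * Real.exp (-xi * |x - y|))

/-!
Both `h_φ` and `H_φ` have the form `(1 - φ) g x + φ/2 (g (x - 1) + g (x + 1))` (`mixShift`), with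
`g = |·|` and with its resolvent `g = F`, `F u = |u| + e^{-ξ|u|}/ξ` respectively. The function `F`
is `C²` with `F'' = ξ e^{-ξ|·|}`, so `H_φ'' = ξ Q_φ` and `H_φ - h_φ = Q_φ / ξ` for
`Q_φ x = (1 - φ) e^{-ξ|x|} + φ/2 (e^{-ξ|x-1|} + e^{-ξ|x+1|})`. Hence both the convexity of `H_φ`
and `h_φ ≤ H_φ` say `Q_φ ≥ 0`, and since `|x ± 1| ≤ |x| + 1` we have
`Q_φ x ≥ e^{-ξ|x|} Q_φ 0 = e^{-ξ|x|} (1 - φ (1 - e^{-ξ}))`.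
-/

theorem hasDerivAt_of_eqOn_Iic_of_eqOn_Ici {f g₁ g₂ f' : ℝ → ℝ} {a : ℝ}
    (h₁ : EqOn f g₁ (Iic a)) (h₂ : EqOn f g₂ (Ici a))
    (hg₁ : ∀ x ≤ a, HasDerivAt g₁ (f' x) x) (hg₂ : ∀ x, a ≤ x → HasDerivAt g₂ (f' x) x)
    (x : ℝ) : HasDerivAt f (f' x) x := by
  rcases lt_trichotomy x a with hx | rfl | hx
  · exact (hg₁ x hx.le).congr_of_eventuallyEq (h₁.eventuallyEq_of_mem (Iic_mem_nhds hx))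
  · rw [← hasDerivWithinAt_univ, ← Iic_union_Ici]
    exact ((hg₁ x le_rfl).hasDerivWithinAt.congr h₁ (h₁ (mem_Iic.2 le_rfl))).union
      ((hg₂ x le_rfl).hasDerivWithinAt.congr h₂ (h₂ (mem_Ici.2 le_rfl)))
  · exact (hg₂ x hx.le).congr_of_eventuallyEq (h₂.eventuallyEq_of_mem (Ici_mem_nhds hx))

theorem convexOn_univ_iff_of_hasDerivAt₂ {f f' f'' : ℝ → ℝ}
    (hf : ∀ x, HasDerivAt f (f' x) x) (hf' : ∀ x, HasDerivAt f' (f'' x) x) :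
    ConvexOn ℝ univ f ↔ ∀ x, 0 ≤ f'' x := by
  have hderiv : deriv f = f' := funext fun x => (hf x).deriv
  refine ⟨fun hconv x => (hf' x).nonneg_of_monotone ?_, fun h => ?_⟩
  · have hmono := hconv.monotoneOn_deriv fun x _ => (hf x).differentiableAt
    rw [hderiv] at hmono
    exact fun a b hab => hmono (mem_univ a) (mem_univ b) hab
  · exact convexOn_of_hasDerivWithinAt2_nonneg convex_univ
      (fun x _ => (hf x).continuousAt.continuousWithinAt)
      (fun x _ => (hf x).hasDerivWithinAt) (fun x _ => (hf' x).hasDerivWithinAt)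
      fun x _ => h x

theorem integrable_comp_abs {f : ℝ → ℝ} (hf : IntegrableOn f (Ioi 0)) :
    Integrable fun x => f |x| := by
  have hpos : IntegrableOn (fun x => f |x|) (Ioi 0) :=
    hf.congr_fun (fun x hx => by rw [abs_of_pos (mem_Ioi.mp hx)]) measurableSet_Ioi
  have hneg : IntegrableOn (fun x => f |x|) (Iio 0) := by
    rw [← neg_zero] at hpos
    simpa only [abs_neg] using hpos.comp_neg_Iio
  rw [← integrableOn_univ, ← Iio_union_Ici]
  exact hneg.union (Iff.mpr integrableOn_Ici_iff_integrableOn_Ioi hpos)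

theorem hasDerivAt_exp_const_mul (c x : ℝ) :
    HasDerivAt (fun x => exp (c * x)) (c * exp (c * x)) x := by
  simpa [mul_comm] using ((hasDerivAt_id x).const_mul c).exp

theorem integral_Ioi_max_mul_exp {a ξ : ℝ} (ha : 0 ≤ a) (hξ : 0 < ξ) :
    IntegrableOn (fun t => max a t * exp (-ξ * t)) (Ioi 0) ∧
      ∫ t in Ioi 0, max a t * exp (-ξ * t) = a / ξ + exp (-ξ * a) / ξ ^ 2 := by
  set G : ℝ → ℝ := fun t => -(max a t * exp (-ξ * t)) / ξ - exp (-ξ * max a t) / ξ ^ 2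
  have hexp := hasDerivAt_exp_const_mul (-ξ)
  have hG (t : ℝ) : HasDerivAt G (max a t * exp (-ξ * t)) t := by
    refine hasDerivAt_of_eqOn_Iic_of_eqOn_Ici (f := G) (f' := fun t => max a t * exp (-ξ * t))
      (a := a)
      (g₁ := fun t => -(a * exp (-ξ * t)) / ξ - exp (-ξ * a) / ξ ^ 2)
      (g₂ := fun t => -(t * exp (-ξ * t)) / ξ - exp (-ξ * t) / ξ ^ 2)
      (fun t ht => by simp only [G, max_eq_left (mem_Iic.1 ht)])
      (fun t ht => by simp only [G, max_eq_right (mem_Ici.1 ht)])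
      (fun t ht => ?_) (fun t ht => ?_) t
    · refine ((((hexp t).const_mul a).neg.div_const ξ).sub_const _).congr_deriv ?_
      rw [max_eq_left ht]
      field_simp
    · refine ((((hasDerivAt_id t).mul (hexp t)).neg.div_const ξ).sub
        ((hexp t).div_const (ξ ^ 2))).congr_deriv ?_
      rw [max_eq_right ht, id]
      field_simp
      ring
  have hlim : Tendsto G atTop (nhds 0) := by
    have h₁ : Tendsto (fun t : ℝ => t * exp (-ξ * t)) atTop (nhds 0) := by
      simpa using tendsto_rpow_mul_exp_neg_mul_atTop_nhds_zero 1 ξ hξ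
    have h₂ : Tendsto (fun t : ℝ => exp (-ξ * t)) atTop (nhds 0) :=
      tendsto_exp_atBot.comp (tendsto_id.const_mul_atTop_of_neg (neg_neg_of_pos hξ))
    have := (h₁.neg.div_const ξ).sub (h₂.div_const (ξ ^ 2))
    simp only [neg_zero, zero_div, sub_zero] at this
    refine this.congr' ?_
    filter_upwards [eventually_ge_atTop a] with t ht
    simp only [G, max_eq_right ht]
  have hnonneg : ∀ t ∈ Ioi (0 : ℝ), 0 ≤ max a t * exp (-ξ * t) := fun t _ =>
    mul_nonneg (ha.trans (le_max_left a t)) (exp_pos _).le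
  refine ⟨integrableOn_Ioi_deriv_of_nonneg' (fun t _ => hG t) hnonneg hlim, ?_⟩
  rw [integral_Ioi_of_hasDerivAt_of_nonneg' (fun t _ => hG t) hnonneg hlim]
  simp only [G, max_eq_left ha]
  field_simp
  simp only [zero_mul, neg_zero, exp_zero, mul_one, zero_sub, neg_sub, sub_neg_eq_add]
  ring

theorem abs_sub_add_abs_add {α : Type*} [Field α] [LinearOrder α] [IsStrictOrderedRing α]
    (a b : α) : |a - b| + |a + b| = 2 * max |a| |b| := by
  rcases le_total |a| |b| with h | h <;> simp only [max_eq_left, max_eq_right, h] <;>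
    rcases abs_cases a with ⟨ha, _⟩ | ⟨ha, _⟩ <;> rcases abs_cases b with ⟨hb, _⟩ | ⟨hb, _⟩ <;>
    rcases abs_cases (a - b) with ⟨h₁, _⟩ | ⟨h₁, _⟩ <;>
    rcases abs_cases (a + b) with ⟨h₂, _⟩ | ⟨h₂, _⟩ <;> linarith

def absResolvent (ξ u : ℝ) : ℝ := |u| + exp (-ξ * |u|) / ξ

theorem integral_abs_sub_mul_exp_neg_abs {ξ : ℝ} (hξ : 0 < ξ) (z : ℝ) :
    Integrable (fun u => |z - u| * (ξ / 2 * exp (-ξ * |u|))) ∧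
      ∫ u, |z - u| * (ξ / 2 * exp (-ξ * |u|)) = absResolvent ξ z := by
  obtain ⟨hint, hval⟩ := integral_Ioi_max_mul_exp (abs_nonneg z) hξ
  set f : ℝ → ℝ := fun t => ξ / 2 * (max |z| t * exp (-ξ * t))
  set p : ℝ → ℝ := fun u => |z - u| * (ξ / 2 * exp (-ξ * |u|))
  -- Averaging `u` with `-u` turns `|z - u|` into `max |z| |u|`, an even function of `u`.
  have hp_add (u : ℝ) : p u + p (-u) = 2 * f |u| := by
    simp only [p, f, abs_neg, sub_neg_eq_add]
    linear_combination (ξ / 2 * exp (-ξ * |u|)) * abs_sub_add_abs_add z u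
  have hf : Integrable fun u => f |u| := integrable_comp_abs (hint.const_mul (ξ / 2))
  have hp : Integrable p := by
    refine (hf.const_mul 2).mono' (by fun_prop) (ae_of_all _ fun u => ?_)
    have : 0 ≤ p (-u) := by positivity
    rw [Real.norm_of_nonneg (by positivity), ← hp_add]
    linarith
  refine ⟨hp, ?_⟩
  have h2 : 2 * ∫ u, p u = 2 * absResolvent ξ z := by
    calc 2 * ∫ u, p u = (∫ u, p u) + ∫ u, p (-u) := by rw [integral_neg_eq_self]; ring
      _ = ∫ u, 2 * f |u| := by rw [← integral_add hp hp.comp_neg]; simp only [hp_add]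
      _ = 2 * absResolvent ξ z := by
        rw [integral_const_mul, integral_comp_abs, integral_const_mul, hval, absResolvent]
        field_simp
  linarith

def mixShift (φ : ℝ) (g : ℝ → ℝ) (x : ℝ) : ℝ :=
  (1 - φ) * g x + φ / 2 * g (x - 1) + φ / 2 * g (x + 1)

theorem hphi_eq_mixShift (φ : ℝ) : hphi φ = mixShift φ fun x => |x| := by
  funext x
  rw [hphi, mixShift, abs_sub_comm 1 x, add_comm 1 x]
  ring

theorem Hphi_eq_mixShift {ξ : ℝ} (hξ : 0 < ξ) (φ : ℝ) :
    Hphi ξ φ = mixShift φ (absResolvent ξ) := by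
  funext x
  obtain ⟨i₀, v₀⟩ := integral_abs_sub_mul_exp_neg_abs hξ x
  obtain ⟨i₁, v₁⟩ := integral_abs_sub_mul_exp_neg_abs hξ (x - 1)
  obtain ⟨i₂, v₂⟩ := integral_abs_sub_mul_exp_neg_abs hξ (x + 1)
  set k : ℝ → ℝ := fun u => ξ / 2 * exp (-ξ * |u|)
  calc Hphi ξ φ x = ∫ u, hphi φ (x - u) * k u := by
        rw [← integral_sub_left_eq_self _ volume x]
        simp only [sub_sub_cancel, k, Hphi]
    _ = ∫ u, (1 - φ) * (|x - u| * k u) + φ / 2 * (|x - 1 - u| * k u)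
          + φ / 2 * (|x + 1 - u| * k u) := by
        congr 1 with u
        rw [hphi_eq_mixShift, mixShift, sub_right_comm, sub_add_eq_add_sub]
        ring
    _ = mixShift φ (absResolvent ξ) x := by
        rw [integral_add _ (i₂.const_mul _), integral_add (i₀.const_mul _) (i₁.const_mul _),
          integral_const_mul, integral_const_mul, integral_const_mul, v₀, v₁, v₂, mixShift]
        exact (i₀.const_mul _).add (i₁.const_mul _)

def absResolventDeriv (ξ u : ℝ) : ℝ := if u ≤ 0 then exp (ξ * u) - 1 else 1 - exp (-ξ * u)

theorem absResolventDeriv_of_nonneg {ξ u : ℝ} (hu : 0 ≤ u) :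
    absResolventDeriv ξ u = 1 - exp (-ξ * u) := by
  rw [absResolventDeriv]
  split_ifs with h
  · obtain rfl := le_antisymm h hu
    simp
  · rfl

theorem hasDerivAt_absResolvent {ξ : ℝ} (hξ : 0 < ξ) (u : ℝ) :
    HasDerivAt (absResolvent ξ) (absResolventDeriv ξ u) u := by
  refine hasDerivAt_of_eqOn_Iic_of_eqOn_Ici (a := 0)
    (g₁ := fun u => -u + exp (ξ * u) / ξ) (g₂ := fun u => u + exp (-ξ * u) / ξ)
    (fun t ht => ?_) (fun t ht => ?_) (fun t ht => ?_) (fun t ht => ?_) u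
  · simp only [absResolvent, abs_of_nonpos (mem_Iic.1 ht), neg_mul_neg]
  · simp only [absResolvent, abs_of_nonneg (mem_Ici.1 ht)]
  · rw [absResolventDeriv, if_pos ht]
    refine ((hasDerivAt_id t).neg.add ((hasDerivAt_exp_const_mul ξ t).div_const ξ)).congr_deriv ?_
    field_simp
    ring
  · rw [absResolventDeriv_of_nonneg ht]
    refine ((hasDerivAt_id t).add ((hasDerivAt_exp_const_mul (-ξ) t).div_const ξ)).congr_deriv ?_
    field_simp
    ring

theorem hasDerivAt_absResolventDeriv (ξ u : ℝ) :
    HasDerivAt (absResolventDeriv ξ) (ξ * exp (-ξ * |u|)) u := by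
  refine hasDerivAt_of_eqOn_Iic_of_eqOn_Ici (f' := fun u => ξ * exp (-ξ * |u|)) (a := 0)
    (g₁ := fun u => exp (ξ * u) - 1) (g₂ := fun u => 1 - exp (-ξ * u))
    (fun t ht => if_pos (mem_Iic.1 ht)) (fun t ht => absResolventDeriv_of_nonneg (mem_Ici.1 ht))
    (fun t ht => ?_) (fun t ht => ?_) u
  · rw [abs_of_nonpos ht, neg_mul_neg]
    exact (hasDerivAt_exp_const_mul ξ t).sub_const 1
  · rw [abs_of_nonneg ht]
    exact ((hasDerivAt_exp_const_mul (-ξ) t).const_sub 1).congr_deriv (by ring)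

theorem hasDerivAt_mixShift {g g' : ℝ → ℝ} (hg : ∀ x, HasDerivAt g (g' x) x) (φ x : ℝ) :
    HasDerivAt (mixShift φ g) (mixShift φ g' x) x :=
  (((hg x).const_mul _).add (((hg (x - 1)).comp_sub_const x 1).const_mul _)).add
    (((hg (x + 1)).comp_add_const x 1).const_mul _)

theorem convexOn_mixShift {g : ℝ → ℝ} (hg : ConvexOn ℝ univ g) {φ : ℝ} (hφ₀ : 0 ≤ φ)
    (hφ₁ : φ ≤ 1) : ConvexOn ℝ univ (mixShift φ g) := by
  have hshift (c : ℝ) : ConvexOn ℝ univ fun x => g (x + c) := by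
    have : ConvexOn ℝ univ (g ∘ fun z => c + z) := hg.translate_right c
    exact this.congr fun x _ => by simp [add_comm]
  have hφ₂ : 0 ≤ φ / 2 := by positivity
  have h := ((hg.smul (sub_nonneg.2 hφ₁)).add ((hshift (-1)).smul hφ₂)).add ((hshift 1).smul hφ₂)
  exact h.congr fun x _ => by simp [mixShift, sub_eq_add_neg]

def Qphi (ξ φ : ℝ) : ℝ → ℝ := mixShift φ fun u => exp (-ξ * |u|)

theorem Hphi_sub_hphi {ξ : ℝ} (hξ : 0 < ξ) (φ x : ℝ) :
    Hphi ξ φ x - hphi φ x = Qphi ξ φ x / ξ := by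
  rw [Hphi_eq_mixShift hξ, hphi_eq_mixShift]
  simp only [mixShift, Qphi, absResolvent]
  ring

theorem convexOn_Hphi_iff {ξ : ℝ} (hξ : 0 < ξ) (φ : ℝ) :
    ConvexOn ℝ univ (Hphi ξ φ) ↔ ∀ x, 0 ≤ Qphi ξ φ x := by
  rw [Hphi_eq_mixShift hξ, convexOn_univ_iff_of_hasDerivAt₂
    (hasDerivAt_mixShift (hasDerivAt_absResolvent hξ) φ)
    (hasDerivAt_mixShift (hasDerivAt_absResolventDeriv ξ) φ)]
  refine forall_congr' fun x => ?_
  have : mixShift φ (fun u => ξ * exp (-ξ * |u|)) x = ξ * Qphi ξ φ x := by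
    simp only [mixShift, Qphi]
    ring
  rw [this, mul_nonneg_iff_of_pos_left hξ]

theorem hphi_le_Hphi_iff {ξ : ℝ} (hξ : 0 < ξ) (φ : ℝ) :
    (∀ x, hphi φ x ≤ Hphi ξ φ x) ↔ ∀ x, 0 ≤ Qphi ξ φ x :=
  forall_congr' fun x => by rw [← sub_nonneg, Hphi_sub_hphi hξ, le_div_iff₀ hξ, zero_mul]

theorem Qphi_zero (ξ φ : ℝ) : Qphi ξ φ 0 = 1 - φ * (1 - exp (-ξ)) := by
  simp only [Qphi, mixShift, abs_zero, mul_zero, exp_zero, mul_one, zero_sub, abs_neg, abs_one,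
    zero_add]
  ring

theorem exp_mul_Qphi_zero_le {ξ φ : ℝ} (hξ : 0 ≤ ξ) (hφ : 0 ≤ φ) (x : ℝ) :
    exp (-ξ * |x|) * Qphi ξ φ 0 ≤ Qphi ξ φ x := by
  have hshift (c : ℝ) (hc : |c| = 1) : exp (-ξ * |x|) * exp (-ξ) ≤ exp (-ξ * |x + c|) := by
    rw [← exp_add, exp_le_exp]
    nlinarith [abs_add_le x c]
  have h₁ := hshift (-1) (by norm_num)
  have h₂ := hshift 1 (by norm_num)
  rw [Qphi_zero]
  simp only [Qphi, mixShift, sub_eq_add_neg]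
  nlinarith [mul_le_mul_of_nonneg_left h₁ hφ, mul_le_mul_of_nonneg_left h₂ hφ]

theorem Qphi_nonneg_iff {ξ φ : ℝ} (hξ : 0 ≤ ξ) (hφ : 0 ≤ φ) :
    (∀ x, 0 ≤ Qphi ξ φ x) ↔ 0 ≤ Qphi ξ φ 0 :=
  ⟨fun h => h 0, fun h x => (mul_nonneg (exp_pos _).le h).trans (exp_mul_Qphi_zero_le hξ hφ x)⟩

theorem convexOn_hphi_iff {φ : ℝ} (hφ : 0 ≤ φ) : ConvexOn ℝ univ (hphi φ) ↔ φ ≤ 1 := by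
  refine ⟨fun hconv => ?_, fun h => ?_⟩
  · have := hconv.2 (mem_univ (-1)) (mem_univ 1) (by norm_num : (0 : ℝ) ≤ 1 / 2)
      (by norm_num : (0 : ℝ) ≤ 1 / 2) (by norm_num)
    norm_num [hphi] at this
    linarith
  · rw [hphi_eq_mixShift]
    exact convexOn_mixShift (convexOn_univ_norm (E := ℝ)) hφ h

/-- `h_φ` is convex iff `φ ≤ 1`; `H_φ` is convex iff `H_φ ≥ h_φ` everywhere
iff `φ ≤ 1/(1-e^{-ξ})`; in particular for `1 < φ ≤ 1/(1-e^{-ξ})` the function `H_φ` is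
convex although `h_φ` is not. -/
theorem statement8 (lam ph : ℝ) (hlam : 0 < lam) (hph : 0 ≤ ph) :
    (ConvexOn ℝ Set.univ (hphi ph) ↔ ph ≤ 1) ∧
    (ConvexOn ℝ Set.univ (Hphi (Real.sqrt (2 * lam)) ph) ↔
      ∀ x : ℝ, hphi ph x ≤ Hphi (Real.sqrt (2 * lam)) ph x) ∧
    (ConvexOn ℝ Set.univ (Hphi (Real.sqrt (2 * lam)) ph) ↔
      ph ≤ 1 / (1 - Real.exp (-Real.sqrt (2 * lam)))) ∧
    (1 < ph → ph ≤ 1 / (1 - Real.exp (-Real.sqrt (2 * lam))) →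
      ConvexOn ℝ Set.univ (Hphi (Real.sqrt (2 * lam)) ph) ∧
        ¬ ConvexOn ℝ Set.univ (hphi ph)) := by
  set ξ := Real.sqrt (2 * lam)
  have hξ : 0 < ξ := Real.sqrt_pos.2 (by positivity)
  have hQ : 0 ≤ Qphi ξ ph 0 ↔ ph ≤ 1 / (1 - exp (-ξ)) := by
    rw [Qphi_zero, le_div_iff₀ (sub_pos.2 (exp_lt_one_iff.2 (neg_neg_of_pos hξ))), sub_nonneg]
  have hH : ConvexOn ℝ univ (Hphi ξ ph) ↔ ph ≤ 1 / (1 - exp (-ξ)) := by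
    rw [convexOn_Hphi_iff hξ, Qphi_nonneg_iff hξ.le hph, hQ]
  refine ⟨convexOn_hphi_iff hph, by rw [convexOn_Hphi_iff hξ, hphi_le_Hphi_iff hξ], hH,
    fun h₁ h₂ => ⟨hH.2 h₂, by rw [convexOn_hphi_iff hph]; linarith⟩⟩

end PoissonOS
end
end

section
/- Let $B$ be a standard one-dimensional Brownian motion, $a>0$, $b\in\mathbb{R}$, $X^x_t=x+aB_t+bt$, and $\beta,\lambda>0$. Let $(E_k)_{k\ge1}$ be i.i.d. rate-$\lambda$ exponential random variables independent of $B$, let $T_n=E_1+\cdots+E_n$, and let $(\mathcal F_t)$ be the augmented filtration generated by $B$ and $N_t=\#\{n:T_n\le t\}$. Let $g:\mathbb{R}\to[0,\infty)$ be convex with $\mathbb{E}[\sup_{s\ge0}e^{-\beta s}g(X^x_s)]<\infty$ for every $x$. Then $G_\lambda(x)=\mathbb{E}[e^{-\beta T_1}g(X^x_{T_1})]$ is convex in $x$, and $V_\lambda(x)=\sup_\tau\mathbb{E}[e^{-\beta\tau}g(X^x_\tau)\mathbf{1}_{\{\tau<\infty\}}]$ (supremum over $(\mathcal F_t)$-stopping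 times $\tau$ with $\tau\in\{T_n:n\ge1\}\cup\{\infty\}$ almost surely) is convex in $x$. -/
open MeasureTheory ProbabilityTheory Real Set Filter
open scoped ENNReal NNReal

noncomputable section

namespace PoissonOS

/-- `B` is a standard one-dimensional Brownian motion started at `x` under `P`:
a measurable process with a.s. continuous paths and independent Gaussian increments. -/
structure IsBM {Om : Type*} [MeasurableSpace Om] (P : Measure Om) (B : ℝ → Om → ℝ)
    (x : ℝ) : Prop where
  isProb : IsProbabilityMeasure P
  meas : ∀ t : ℝ, Measurable (B t)
  init : ∀ᵐ ω ∂P, B 0 ω = x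
  cont : ∀ᵐ ω ∂P, Continuous fun t : ℝ => B t ω
  gauss : ∀ s t : ℝ, 0 ≤ s → s ≤ t →
    P.map (fun ω => B t ω - B s ω) = gaussianReal 0 (Real.toNNReal (t - s))
  indepIncr : ∀ (n : ℕ) (t : Fin (n + 1) → ℝ), (∀ i, 0 ≤ t i) → Monotone t →
    iIndepFun
      (fun i : Fin n => fun ω => B (t i.succ) ω - B (t i.castSucc) ω) P

/-- The σ-algebra generated by the whole path of `B`. -/
def pathSigma {Om : Type*} [MeasurableSpace Om] (B : ℝ → Om → ℝ) : MeasurableSpace Om :=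
  ⨆ t : ℝ, MeasurableSpace.comap (B t) inferInstance

/-- `T` is an exponential random variable of rate `r`, independent of the process `B`. -/
structure IsExpIndep {Om : Type*} [MeasurableSpace Om] (P : Measure Om) (T : Om → ℝ)
    (r : ℝ) (B : ℝ → Om → ℝ) : Prop where
  meas : Measurable T
  law : ∀ t : ℝ, 0 ≤ t → P {ω | t < T ω} = ENNReal.ofReal (Real.exp (-(r * t)))
  indep : Indep (MeasurableSpace.comap T inferInstance) (pathSigma B) P

/-- `E` is an i.i.d. sequence of rate-`r` exponential random variables, independent of `B`. -/
structure IsExpSeq {Om : Type*} [MeasurableSpace Om] (P : Measure Om) (E : ℕ → Om → ℝ)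
    (r : ℝ) (B : ℝ → Om → ℝ) : Prop where
  meas : ∀ n, Measurable (E n)
  law : ∀ n, ∀ t : ℝ, 0 ≤ t → P {ω | t < E n ω} = ENNReal.ofReal (Real.exp (-(r * t)))
  iid : iIndepFun E P
  indep : Indep (⨆ n : ℕ, MeasurableSpace.comap (E n) inferInstance) (pathSigma B) P

/-- Cumulative hazard `∫_0^t θ(B_u) du`, valued in `[0,∞]`. -/
def haz {Om : Type*} (th : ℝ → ℝ) (B : ℝ → Om → ℝ) (t : ℝ) (ω : Om) : ℝ≥0∞ :=
  ∫⁻ u in Set.Ioc (0 : ℝ) t, ENNReal.ofReal (th (B u ω))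

/-- `E_1 + ⋯ + E_n` (the sum of the first `n` entries of the sequence `E`). -/
def expSum {Om : Type*} (E : ℕ → Om → ℝ) (n : ℕ) (ω : Om) : ℝ :=
  ∑ k ∈ Finset.range n, E k ω

/-- The `n`-th event time `T^θ_n = inf {t ≥ 0 : ∫_0^t θ(B_u) du ≥ E_1 + ⋯ + E_n}`
of the Poisson process with state-dependent rate `θ(B_t)` (`= ∞` if there is no such `t`). -/
def eventTime {Om : Type*} (th : ℝ → ℝ) (B : ℝ → Om → ℝ) (E : ℕ → Om → ℝ) (n : ℕ)
    (ω : Om) : ℝ≥0∞ :=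
  ⨅ (t : ℝ) (_ : 0 ≤ t) (_ : ENNReal.ofReal (expSum E n ω) ≤ haz th B t ω),
    ENNReal.ofReal t

/-- Discounted payoff `e^{-βτ} g(B_τ) 1_{τ<∞}`, valued in `[0,∞]`. -/
def payoff {Om : Type*} (β : ℝ) (g : ℝ → ℝ) (B : ℝ → Om → ℝ) (τ : Om → ℝ≥0∞)
    (ω : Om) : ℝ≥0∞ :=
  {ω' | τ ω' < ⊤}.indicator
    (fun ω' => ENNReal.ofReal (Real.exp (-β * (τ ω').toReal) * g (B (τ ω').toReal ω'))) ω

/-- `E[e^{-βτ} g(B_τ) 1_{τ<∞}]`, valued in `[0,∞]`. -/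
def stopVal {Om : Type*} [MeasurableSpace Om] (P : Measure Om) (β : ℝ) (g : ℝ → ℝ)
    (B : ℝ → Om → ℝ) (τ : Om → ℝ≥0∞) : ℝ≥0∞ :=
  ∫⁻ ω, payoff β g B τ ω ∂P

/-- `E[sup_{s ≥ t} e^{-βs} g(B_s)]`, valued in `[0,∞]`. -/
def tailSup {Om : Type*} [MeasurableSpace Om] (P : Measure Om) (β : ℝ) (g : ℝ → ℝ)
    (B : ℝ → Om → ℝ) (t : ℝ) : ℝ≥0∞ :=
  ∫⁻ ω, ⨆ (s : ℝ) (_ : t ≤ s), ENNReal.ofReal (Real.exp (-β * s) * g (B s ω)) ∂P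

/-- The σ-algebra generated by the `P`-null sets. -/
def nullSets {Om : Type*} [MeasurableSpace Om] (P : Measure Om) : MeasurableSpace Om :=
  MeasurableSpace.generateFrom {A : Set Om | P A = 0}

/-- The augmented filtration generated by the process `B` and the counting process
of the event times `(T_n)`. -/
def filt {Om : Type*} [MeasurableSpace Om] (P : Measure Om) (B : ℝ → Om → ℝ)
    (T : ℕ → Om → ℝ≥0∞) (t : ℝ) : MeasurableSpace Om :=
  (⨆ s : {s : ℝ // s ≤ t}, MeasurableSpace.comap (B s.1) inferInstance) ⊔
    (⨆ s : {s : ℝ // s ≤ t}, ⨆ n : ℕ,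
      MeasurableSpace.generateFrom {A : Set Om | A = {ω | T n ω ≤ ENNReal.ofReal s.1}}) ⊔
    nullSets P

/-- `τ` is a stopping time of the filtration `F` (as a `[0,∞]`-valued random time). -/
def IsStopTime {Om : Type*} (F : ℝ → MeasurableSpace Om) (τ : Om → ℝ≥0∞) : Prop :=
  ∀ t : ℝ, MeasurableSet[F t] {ω | τ ω ≤ ENNReal.ofReal t}

/-- `τ ∈ {T_n : n ≥ 1} ∪ {∞}` almost surely. -/
def ValuesIn {Om : Type*} [MeasurableSpace Om] (P : Measure Om) (T : ℕ → Om → ℝ≥0∞)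
    (τ : Om → ℝ≥0∞) : Prop :=
  ∀ᵐ ω ∂P, τ ω = ⊤ ∨ ∃ n : ℕ, 1 ≤ n ∧ τ ω = T n ω

/-- Value of the Poisson optimal stopping problem: the supremum of
`E[e^{-βτ} g(Bpay_τ) 1_{τ<∞}]` over stopping times `τ` of the augmented filtration
generated by `Bfilt` and the counting process of `(T_n)`, with `τ ∈ {T_n : n ≥ 1} ∪ {∞}` a.s. -/
def Vval {Om : Type*} [MeasurableSpace Om] (P : Measure Om) (β : ℝ) (g : ℝ → ℝ)
    (Bpay Bfilt : ℝ → Om → ℝ) (T : ℕ → Om → ℝ≥0∞) : ℝ≥0∞ :=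
  ⨆ (τ : Om → ℝ≥0∞) (_ : IsStopTime (filt P Bfilt T) τ) (_ : ValuesIn P T τ),
    stopVal P β g Bpay τ

/-!
Once the starting point `x` is separated from the path, `X^x_t = x + (a W_t + b t)`, the
discounted payoff at any fixed random time `τ` is a convex function of `x`, pathwise. Taking
expectations keeps this convexity (additivity of the lower integral needs the payoff to be
a.e.-measurable, which is where continuity of the paths and the stopping-time property enter).
The admissible stopping times do not depend on `x`, since the filtration is generated by `W`
and the Poisson times, so `V_λ` is a supremum of convex functions, and `G_λ` is the value of
the single time `T_1`. The integrability assumption makes all these values finite, so convexity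
survives passing to real numbers.
-/

section Convexity

variable {E : Type*} [AddCommGroup E] [Module ℝ E] {s : Set E}

theorem _root_.ConvexOn.ennreal_toReal {F : E → ℝ≥0∞} (hF : ConvexOn ℝ≥0 s F)
    (hfin : ∀ x ∈ s, F x ≠ ⊤) : ConvexOn ℝ s fun x => (F x).toReal := by
  refine ⟨fun x hx y hy a b ha hb hab => ?_, fun x hx y hy a b ha hb hab => ?_⟩
  · lift a to ℝ≥0 using ha
    lift b to ℝ≥0 using hb
    exact hF.1 hx hy a.2 b.2 (by exact_mod_cast hab)
  · lift a to ℝ≥0 using ha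
    lift b to ℝ≥0 using hb
    have hx' : (a : ℝ≥0∞) * F x ≠ ⊤ := ENNReal.mul_ne_top ENNReal.coe_ne_top (hfin x hx)
    have hy' : (b : ℝ≥0∞) * F y ≠ ⊤ := ENNReal.mul_ne_top ENNReal.coe_ne_top (hfin y hy)
    calc (F ((a : ℝ) • x + (b : ℝ) • y)).toReal
        ≤ (a * F x + b * F y).toReal :=
          ENNReal.toReal_mono (ENNReal.add_ne_top.2 ⟨hx', hy'⟩) <| by
            simpa [NNReal.smul_def, ENNReal.smul_def] using
              hF.2 hx hy a.2 b.2 (by exact_mod_cast hab)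
      _ = a * (F x).toReal + b * (F y).toReal := by
          rw [ENNReal.toReal_add hx' hy']
          simp

theorem _root_.ConvexOn.ennreal_ofReal {f : E → ℝ} (hf : ConvexOn ℝ s f) :
    ConvexOn ℝ≥0 s fun x => ENNReal.ofReal (f x) := by
  refine ⟨fun x hx y hy a b _ _ hab => hf.1 hx hy a.2 b.2 (by exact_mod_cast hab),
    fun x hx y hy a b _ _ hab => ?_⟩
  simp only [NNReal.smul_def, ENNReal.smul_def, smul_eq_mul]
  calc ENNReal.ofReal (f ((a : ℝ) • x + (b : ℝ) • y))
      ≤ ENNReal.ofReal (a * f x + b * f y) :=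
        ENNReal.ofReal_le_ofReal (hf.2 hx hy a.2 b.2 (by exact_mod_cast hab))
    _ ≤ ENNReal.ofReal (a * f x) + ENNReal.ofReal (b * f y) := ENNReal.ofReal_add_le
    _ = a * ENNReal.ofReal (f x) + b * ENNReal.ofReal (f y) := by
        rw [ENNReal.ofReal_mul a.coe_nonneg, ENNReal.ofReal_mul b.coe_nonneg,
          ENNReal.ofReal_coe_nnreal, ENNReal.ofReal_coe_nnreal]

theorem _root_.ConvexOn.iSup_ennreal {ι : Sort*} {f : ι → E → ℝ≥0∞} (hs : Convex ℝ≥0 s)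
    (hf : ∀ i, ConvexOn ℝ≥0 s (f i)) : ConvexOn ℝ≥0 s fun x => ⨆ i, f i x :=
  ⟨hs, fun x hx y hy a b ha hb hab => iSup_le fun i =>
    ((hf i).2 hx hy ha hb hab).trans <| by gcongr <;> exact le_iSup (f · _) i⟩

theorem _root_.ConvexOn.lintegral {Om : Type*} [MeasurableSpace Om] {P : Measure Om}
    {f : E → Om → ℝ≥0∞} (hs : Convex ℝ≥0 s) (hf : ∀ ω, ConvexOn ℝ≥0 s (f · ω))
    (hm : ∀ x ∈ s, AEMeasurable (f x) P) : ConvexOn ℝ≥0 s fun x => ∫⁻ ω, f x ω ∂P := by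
  refine ⟨hs, fun x hx y hy a b ha hb hab => ?_⟩
  calc ∫⁻ ω, f (a • x + b • y) ω ∂P
      ≤ ∫⁻ ω, (a • f x ω + b • f y ω) ∂P := lintegral_mono fun ω => (hf ω).2 hx hy ha hb hab
    _ = a • ∫⁻ ω, f x ω ∂P + b • ∫⁻ ω, f y ω ∂P := by
        simp only [ENNReal.smul_def, smul_eq_mul]
        rw [lintegral_add_left' ((hm x hx).const_mul _),
          lintegral_const_mul' _ _ ENNReal.coe_ne_top, lintegral_const_mul' _ _ ENNReal.coe_ne_top]

end Convexity

section Measurability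

theorem _root_.ENNReal.measurable_of_measurableSet_le_ofReal {α : Type*}
    {m : MeasurableSpace α} {τ : α → ℝ≥0∞}
    (hτ : ∀ t : ℝ, MeasurableSet {ω | τ ω ≤ ENNReal.ofReal t}) : Measurable τ := by
  refine measurable_of_Iio fun a => ?_
  have hset : τ ⁻¹' Iio a =
      ⋃ (q : ℚ) (_ : ENNReal.ofReal q < a), {ω | τ ω ≤ ENNReal.ofReal q} := by
    ext ω
    simp only [mem_preimage, mem_Iio, mem_iUnion, mem_ofPred_eq, exists_prop]
    constructor
    · intro h
      obtain ⟨q, _, hτq, hqa⟩ := ENNReal.lt_iff_exists_rat_btwn.1 h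
      exact ⟨q, hqa, hτq.le⟩
    · rintro ⟨q, hqa, hτq⟩
      exact hτq.trans_lt hqa
  rw [hset]
  exact .iUnion fun q => .iUnion fun _ => hτ q

variable {Om : Type*} [MeasurableSpace Om] {P : Measure Om}

theorem aemeasurable_comp_of_ae_continuous {B : ℝ → Om → ℝ} {u : Om → ℝ}
    (hB : ∀ t, Measurable (B t)) (hBc : ∀ᵐ ω ∂P, Continuous fun t => B t ω)
    (hu : AEMeasurable u P) : AEMeasurable (fun ω => B (u ω) ω) P := by
  -- Zeroing `B` on a measurable null set containing the discontinuous paths makes every path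
  -- continuous, so the modified process is jointly measurable.
  set N := toMeasurable P {ω | ¬Continuous fun t => B t ω}
  have hN : P N = 0 := by rw [measure_toMeasurable]; exact ae_iff.1 hBc
  set B' : ℝ → Om → ℝ := fun t => Nᶜ.indicator (B t)
  have hB' : Measurable (Function.uncurry B') := by
    refine measurable_uncurry_of_continuous_of_measurable (fun ω => ?_)
      (fun t => (hB t).indicator (measurableSet_toMeasurable _ _).compl)
    by_cases hω : ω ∈ N
    · simpa [B', hω] using continuous_const
    · have hc : Continuous fun t => B t ω := by
        by_contra h; exact hω (subset_toMeasurable _ _ h)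
      simpa [B', hω] using hc
  refine (hB'.comp_aemeasurable (hu.prodMk aemeasurable_id)).congr ?_
  filter_upwards [measure_eq_zero_iff_ae_notMem.1 hN] with ω hω
  simp [B', hω]

theorem filt_le_nullMeasurable {B : ℝ → Om → ℝ} {T : ℕ → Om → ℝ≥0∞}
    (hB : ∀ t, Measurable (B t)) (hT : ∀ n, Measurable (T n)) (t : ℝ) {A : Set Om}
    (hA : MeasurableSet[filt P B T t] A) : NullMeasurableSet A P := by
  suffices h : filt P B T t ≤
      (NullMeasurableSpace.instMeasurableSpace : MeasurableSpace (NullMeasurableSpace Om P)) from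
    h A hA
  have hle : (‹_› : MeasurableSpace Om) ≤ NullMeasurableSpace.instMeasurableSpace (μ := P) :=
    fun A hA => hA.nullMeasurableSet
  refine sup_le (sup_le ?_ ?_) ?_
  · exact iSup_le fun s => (hB s.1).comap_le.trans hle
  · refine iSup_le fun s => iSup_le fun n => MeasurableSpace.generateFrom_le ?_
    rintro _ rfl
    exact hle _ (measurableSet_le (hT n) measurable_const)
  · exact MeasurableSpace.generateFrom_le fun A hA => NullMeasurableSet.of_null hA

theorem IsStopTime.aemeasurable {B : ℝ → Om → ℝ} {T : ℕ → Om → ℝ≥0∞} {τ : Om → ℝ≥0∞}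
    (hτ : IsStopTime (filt P B T) τ) (hB : ∀ t, Measurable (B t))
    (hT : ∀ n, Measurable (T n)) : AEMeasurable τ P :=
  NullMeasurable.aemeasurable <| ENNReal.measurable_of_measurableSet_le_ofReal
    fun t => filt_le_nullMeasurable hB hT t (hτ t)

theorem aemeasurable_payoff {β : ℝ} {g : ℝ → ℝ} {B : ℝ → Om → ℝ} {τ : Om → ℝ≥0∞}
    (hg : Measurable g) (hB : ∀ t, Measurable (B t))
    (hBc : ∀ᵐ ω ∂P, Continuous fun t => B t ω) (hτ : AEMeasurable τ P) :
    AEMeasurable (payoff β g B τ) P := by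
  have hu := hτ.ennreal_toReal
  refine AEMeasurable.indicator₀ ?_ (hτ.nullMeasurable measurableSet_Iio)
  exact ENNReal.measurable_ofReal.comp_aemeasurable <|
    (Real.measurable_exp.comp_aemeasurable (hu.const_mul _)).mul
      (hg.comp_aemeasurable (aemeasurable_comp_of_ae_continuous hB hBc hu))

end Measurability

section Stopping

variable {Om : Type*} {β : ℝ} {g : ℝ → ℝ} {Y : ℝ → Om → ℝ}

theorem convexOn_payoff_add (hg : ConvexOn ℝ univ g) (τ : Om → ℝ≥0∞) (ω : Om) :
    ConvexOn ℝ≥0 univ fun x => payoff β g (fun t ω => x + Y t ω) τ ω := by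
  by_cases hτ : τ ω < ⊤
  · simp only [payoff, indicator_of_mem (show ω ∈ {ω' | τ ω' < ⊤} from hτ)]
    refine ConvexOn.ennreal_ofReal ?_
    simpa [smul_eq_mul, add_comm] using
      (hg.translate_right (Y (τ ω).toReal ω)).smul (Real.exp_nonneg (-β * (τ ω).toReal))
  · simp only [payoff, indicator_of_notMem (show ω ∉ {ω' | τ ω' < ⊤} from hτ)]
    exact convexOn_const 0 convex_univ

variable [MeasurableSpace Om] {P : Measure Om}

theorem stopVal_le_tailSup (B : ℝ → Om → ℝ) (τ : Om → ℝ≥0∞) :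
    stopVal P β g B τ ≤ tailSup P β g B 0 := by
  refine lintegral_mono fun ω => ?_
  by_cases hτ : τ ω < ⊤
  · rw [payoff, indicator_of_mem (by exact hτ)]
    exact le_iSup₂_of_le (τ ω).toReal ENNReal.toReal_nonneg le_rfl
  · rw [payoff, indicator_of_notMem (by exact hτ)]
    exact zero_le

theorem Vval_le_tailSup (B Bfilt : ℝ → Om → ℝ) (T : ℕ → Om → ℝ≥0∞) :
    Vval P β g B Bfilt T ≤ tailSup P β g B 0 :=
  iSup₂_le fun τ _ => iSup_le fun _ => stopVal_le_tailSup B τ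

theorem stopVal_ofReal_eq_lintegral {B : ℝ → Om → ℝ} {u : Om → ℝ} (hu : ∀ᵐ ω ∂P, 0 ≤ u ω) :
    stopVal P β g B (fun ω => ENNReal.ofReal (u ω)) =
      ∫⁻ ω, ENNReal.ofReal (Real.exp (-β * u ω) * g (B (u ω) ω)) ∂P := by
  refine lintegral_congr_ae ?_
  filter_upwards [hu] with ω hω
  simp [payoff, ENNReal.toReal_ofReal hω]

theorem convexOn_stopVal_add (hg : ConvexOn ℝ univ g) (hY : ∀ t, Measurable (Y t))
    (hYc : ∀ᵐ ω ∂P, Continuous fun t => Y t ω) {τ : Om → ℝ≥0∞} (hτ : AEMeasurable τ P) :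
    ConvexOn ℝ≥0 univ fun x => stopVal P β g (fun t ω => x + Y t ω) τ := by
  refine ConvexOn.lintegral convex_univ (convexOn_payoff_add hg τ) fun x _ => ?_
  refine aemeasurable_payoff (continuousOn_univ.1 (hg.continuousOn isOpen_univ)).measurable
    (fun t => measurable_const.add (hY t)) ?_ hτ
  filter_upwards [hYc] with ω hω
  exact continuous_const.add hω

theorem convexOn_Vval_add (hg : ConvexOn ℝ univ g) (hY : ∀ t, Measurable (Y t))
    (hYc : ∀ᵐ ω ∂P, Continuous fun t => Y t ω) {Bfilt : ℝ → Om → ℝ} {T : ℕ → Om → ℝ≥0∞}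
    (hBfilt : ∀ t, Measurable (Bfilt t)) (hT : ∀ n, Measurable (T n)) :
    ConvexOn ℝ≥0 univ fun x => Vval P β g (fun t ω => x + Y t ω) Bfilt T :=
  .iSup_ennreal convex_univ fun _ => .iSup_ennreal convex_univ fun hτ =>
    .iSup_ennreal convex_univ fun _ =>
      convexOn_stopVal_add hg hY hYc (hτ.aemeasurable hBfilt hT)

end Stopping

theorem statement11_general {Om : Type*} [MeasurableSpace Om] (P : Measure Om) (W : ℝ → Om → ℝ)
    (a b β lam : ℝ) (E : ℕ → Om → ℝ) (g : ℝ → ℝ)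
    (hW : IsBM P W 0) (hE : IsExpSeq P E lam W)
    (hg : ConvexOn ℝ Set.univ g)
    (hsup : ∀ x : ℝ, tailSup P β g (fun t ω => x + a * W t ω + b * t) 0 < ⊤) :
    ConvexOn ℝ Set.univ (fun x =>
      (∫⁻ ω, ENNReal.ofReal
        (Real.exp (-β * expSum E 1 ω) *
          g (x + a * W (expSum E 1 ω) ω + b * expSum E 1 ω)) ∂P).toReal) ∧
    ConvexOn ℝ Set.univ (fun x =>
      (Vval P β g (fun t ω => x + a * W t ω + b * t) W
        (fun n ω => ENNReal.ofReal (expSum E n ω))).toReal) := by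
  have := hW.isProb
  simp only [add_assoc] at hsup ⊢
  have hY : ∀ t, Measurable fun ω => a * W t ω + b * t := fun t =>
    ((hW.meas t).const_mul a).add_const _
  have hYc : ∀ᵐ ω ∂P, Continuous fun t => a * W t ω + b * t := by
    filter_upwards [hW.cont] with ω hω
    fun_prop
  have hT : ∀ n, Measurable fun ω => ENNReal.ofReal (expSum E n ω) := fun n =>
    (Finset.measurable_sum _ fun k _ => hE.meas k).ennreal_ofReal
  have hT₁ : ∀ᵐ ω ∂P, 0 ≤ expSum E 1 ω := by
    have hpos : ∀ᵐ ω ∂P, 0 < E 0 ω :=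
      (ae_iff_measure_eq (measurableSet_lt measurable_const (hE.meas 0)).nullMeasurableSet).2
        (by simpa using hE.law 0 0 le_rfl)
    filter_upwards [hpos] with ω hω
    simpa [expSum] using hω.le
  constructor
  · refine ((convexOn_stopVal_add hg hY hYc (hT 1).aemeasurable).ennreal_toReal
      fun x _ => ((stopVal_le_tailSup _ _).trans_lt (hsup x)).ne).congr
      fun x _ => congrArg ENNReal.toReal (stopVal_ofReal_eq_lintegral hT₁)
  · exact (convexOn_Vval_add hg hY hYc hW.meas hT).ennreal_toReal
      fun x _ => ((Vval_le_tailSup _ _ _).trans_lt (hsup x)).ne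

/-- for Brownian motion with drift `X^x_t = x + aB_t + bt` and convex `g`,
both `G_λ(x) = E[e^{-β T_1} g(X^x_{T_1})]` and the Poisson stopping value `V_λ(x)` are
convex in `x`. -/
theorem statement11 {Om : Type*} [MeasurableSpace Om] (P : Measure Om) (W : ℝ → Om → ℝ)
    (a b β lam : ℝ) (E : ℕ → Om → ℝ) (g : ℝ → ℝ)
    (ha : 0 < a) (hβ : 0 < β) (hlam : 0 < lam)
    (hW : IsBM P W 0) (hE : IsExpSeq P E lam W)
    (hg : ConvexOn ℝ Set.univ g) (hg0 : ∀ y : ℝ, 0 ≤ g y)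
    (hsup : ∀ x : ℝ, tailSup P β g (fun t ω => x + a * W t ω + b * t) 0 < ⊤) :
    ConvexOn ℝ Set.univ (fun x =>
      (∫⁻ ω, ENNReal.ofReal
        (Real.exp (-β * expSum E 1 ω) *
          g (x + a * W (expSum E 1 ω) ω + b * expSum E 1 ω)) ∂P).toReal) ∧
    ConvexOn ℝ Set.univ (fun x =>
      (Vval P β g (fun t ω => x + a * W t ω + b * t) W
        (fun n ω => ENNReal.ofReal (expSum E n ω))).toReal) :=
  statement11_general P W a b β lam E g hW hE hg hsup

end PoissonOS
end
end

section
/- Assume $\mathbb{E}^x\big[\sup_{s\ge0}e^{-\beta s}g(B_s)\big]<\infty$ and $\lim_{t\to\infty}\mathbb{E}^x\big[\sup_{s\ge t}e^{-\beta s}g(B_s)\big]=0$ for every $x$. Then $V_\theta(x)=\lim_{n\to\infty}V^{(n)}_\theta(x)$ for every $x$, where $V^{(n)}_\theta(x)$ is the supremum of $\mathbb{E}^x[e^{-\beta\tau}g(B_\tau)\mathbf{1}_{\{\tau<\infty\}}]$ over $(\mathcal F_t)$-stopping times $\tau$ with $\tau\in\{T^\theta_1,\dots,T^\theta_n\}\cup\{\infty\}$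 almost surely, and $V_\theta(x)$ is the supremum over $(\mathcal F_t)$-stopping times $\tau$ with $\tau\in\{T^\theta_n:n\ge1\}\cup\{\infty\}$ almost surely. -/
open MeasureTheory ProbabilityTheory Real Set Filter
open scoped ENNReal NNReal

noncomputable section

namespace PoissonOS

/-- `τ ∈ {T_1, …, T_n} ∪ {∞}` almost surely. -/
def ValuesInLe {Om : Type*} [MeasurableSpace Om] (P : Measure Om) (T : ℕ → Om → ℝ≥0∞)
    (n : ℕ) (τ : Om → ℝ≥0∞) : Prop :=
  ∀ᵐ ω ∂P, τ ω = ⊤ ∨ ∃ k : ℕ, 1 ≤ k ∧ k ≤ n ∧ τ ω = T k ω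

/-- Value of the Poisson optimal stopping problem restricted to the first `n` event times. -/
def VvalN {Om : Type*} [MeasurableSpace Om] (P : Measure Om) (β : ℝ) (g : ℝ → ℝ)
    (Bpay Bfilt : ℝ → Om → ℝ) (T : ℕ → Om → ℝ≥0∞) (n : ℕ) : ℝ≥0∞ :=
  ⨆ (τ : Om → ℝ≥0∞) (_ : IsStopTime (filt P Bfilt T) τ) (_ : ValuesInLe P T n τ),
    stopVal P β g Bpay τ

/-! The truncations `σₙ = τ` on `{τ ≤ T_{n+1}}`, `σₙ = ∞` elsewhere, are again stopping times of
the filtration and take values in `{T_1, …, T_{n+1}} ∪ {∞}` because the event times increase a.s.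
Their payoffs `1_{τ ≤ T_{n+1}} e^{-βτ} g(B_τ)` increase to that of `τ`, so the expected payoffs
converge by monotone convergence over the increasing sets `{τ ≤ T_{n+1}}`; this only needs these
sets to be null-measurable, which follows from a jointly measurable version of the a.s.
continuous path. -/

theorem lintegral_eq_iSup_lintegral_indicator {α : Type*} [MeasurableSpace α] {μ : Measure α}
    {f : α → ℝ≥0∞} {A : ℕ → Set α} (hA : ∀ n, NullMeasurableSet (A n) μ)
    (hmono : ∀ᵐ x ∂μ, ∀ m n, m ≤ n → x ∈ A m → x ∈ A n)
    (hf : ∀ᵐ x ∂μ, f x ≠ 0 → ∃ n, x ∈ A n) :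
    ∫⁻ x, f x ∂μ = ⨆ n, ∫⁻ x, (A n).indicator f x ∂μ := by
  have hacc : ∀ n, accumulate A n =ᵐ[μ] A n := fun n => by
    refine eventuallyEq_set.2 ?_
    filter_upwards [hmono] with x hx
    rw [mem_accumulate]
    exact ⟨fun ⟨m, hm, h⟩ => hx m n hm h, fun h => ⟨n, le_rfl, h⟩⟩
  calc ∫⁻ x, f x ∂μ = ∫⁻ x in ⋃ n, A n, f x ∂μ := by
        rw [← lintegral_indicator₀ (.iUnion hA)]
        refine lintegral_congr_ae ?_
        filter_upwards [hf] with x hx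
        rw [eq_comm, indicator_apply_eq_self]
        exact fun hx' => by_contra fun h => hx' (mem_iUnion.2 (hx h))
    _ = ⨆ n, ∫⁻ x in accumulate A n, f x ∂μ := by
        rw [← iUnion_accumulate, setLIntegral_iUnion_of_directed _ monotone_accumulate.directed_le]
    _ = ⨆ n, ∫⁻ x, (A n).indicator f x ∂μ := by
        simp only [Measure.restrict_congr_set (hacc _), lintegral_indicator₀ (hA _)]

theorem exists_measurable_uncurry_ae_eq {ι α β : Type*} [TopologicalSpace ι]
    [TopologicalSpace.MetrizableSpace ι] [MeasurableSpace ι] [SecondCountableTopology ι]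
    [OpensMeasurableSpace ι] [MeasurableSpace α] [TopologicalSpace β]
    [TopologicalSpace.PseudoMetrizableSpace β] [MeasurableSpace β] [BorelSpace β] [Zero β]
    {μ : Measure α} {u : ι → α → β} (hu : ∀ i, Measurable (u i))
    (hcont : ∀ᵐ x ∂μ, Continuous fun i => u i x) :
    ∃ v : ι → α → β, Measurable (Function.uncurry v) ∧ ∀ᵐ x ∂μ, ∀ i, v i x = u i x := by
  classical
  set S := (toMeasurable μ {x | ¬Continuous fun i => u i x})ᶜ
  have hS : MeasurableSet S := (measurableSet_toMeasurable _ _).compl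
  have hSae : ∀ᵐ x ∂μ, x ∈ S := by
    rw [ae_iff, ← compl_def, compl_compl, measure_toMeasurable]
    exact ae_iff.1 hcont
  refine ⟨fun i => S.piecewise (u i) 0,
    measurable_uncurry_of_continuous_of_measurable (fun x => ?_)
      fun i => (hu i).piecewise hS measurable_const, ?_⟩
  · by_cases hx : x ∈ S
    · simp only [piecewise_eq_of_mem _ _ _ hx]
      by_contra h
      exact hx (subset_toMeasurable _ _ h)
    · simpa only [piecewise_eq_of_notMem _ _ _ hx] using continuous_const
  · filter_upwards [hSae] with x hx i
    exact piecewise_eq_of_mem _ _ _ hx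

theorem setOf_lt_eq_iUnion_rat {Ω : Type*} (ρ τ : Ω → ℝ≥0∞) :
    {ω | ρ ω < τ ω} =
      ⋃ q : ℚ, {ω | ρ ω ≤ ENNReal.ofReal q} \ {ω | τ ω ≤ ENNReal.ofReal q} := by
  ext ω
  simp only [mem_iUnion, Set.mem_sdiff]
  constructor
  · intro h
    obtain ⟨q, -, hρq, hqτ⟩ := ENNReal.lt_iff_exists_rat_btwn.1 h
    exact ⟨q, hρq.le, not_le.2 hqτ⟩
  · rintro ⟨q, hρq, hqτ⟩
    exact hρq.trans_lt (not_le.1 (show ¬τ ω ≤ _ from hqτ))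

section StopTime

variable {Om : Type*} {F : ℝ → MeasurableSpace Om} {τ ρ : Om → ℝ≥0∞}

def stopBefore (τ ρ : Om → ℝ≥0∞) (ω : Om) : ℝ≥0∞ :=
  if τ ω ≤ ρ ω then τ ω else ⊤

theorem IsStopTime.stopBefore (hF : Monotone F) (hτ : IsStopTime F τ) (hρ : IsStopTime F ρ) :
    IsStopTime F (stopBefore τ ρ) := by
  intro t
  have hset : {ω | PoissonOS.stopBefore τ ρ ω ≤ ENNReal.ofReal t} =
      {ω | τ ω ≤ ENNReal.ofReal t} \
        ⋃ q : ℚ, ({ω | ρ ω ≤ ENNReal.ofReal q} \ {ω | τ ω ≤ ENNReal.ofReal q}) ∩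
          {ω | τ ω ≤ ENNReal.ofReal t} := by
    rw [← iUnion_inter, ← setOf_lt_eq_iUnion_rat]
    ext ω
    by_cases h : τ ω ≤ ρ ω <;> simp [PoissonOS.stopBefore, h]
  rw [hset]
  refine (hτ t).diff (.iUnion fun q => ?_)
  rcases le_or_gt (q : ℝ) t with hq | hq
  · exact hF hq _ ((hρ q).diff (hτ q)) |>.inter (hτ t)
  · convert @MeasurableSet.empty _ (F t)
    refine eq_empty_of_forall_notMem fun ω ⟨⟨_, hτq⟩, hτt⟩ => hτq ?_
    exact (show τ ω ≤ _ from hτt).trans (ENNReal.ofReal_le_ofReal hq.le)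

theorem IsStopTime.nullMeasurableSet_le [MeasurableSpace Om] {μ : Measure Om}
    (hF : ∀ t s, MeasurableSet[F t] s → NullMeasurableSet s μ) (hτ : IsStopTime F τ)
    (hρ : IsStopTime F ρ) : NullMeasurableSet {ω | τ ω ≤ ρ ω} μ := by
  have hcompl : {ω | τ ω ≤ ρ ω} = {ω | ρ ω < τ ω}ᶜ := by
    ext ω
    simp
  rw [hcompl, setOf_lt_eq_iUnion_rat]
  exact (NullMeasurableSet.iUnion fun q : ℚ => (hF _ _ (hρ q)).diff (hF _ _ (hτ q))).compl

theorem payoff_stopBefore (β : ℝ) (g : ℝ → ℝ) (B : ℝ → Om → ℝ) :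
    payoff β g B (stopBefore τ ρ) = {ω | τ ω ≤ ρ ω}.indicator (payoff β g B τ) := by
  funext ω
  by_cases h : τ ω ≤ ρ ω <;> simp [payoff, indicator_apply, PoissonOS.stopBefore, h]

end StopTime

section Filtration

variable {Om : Type*} [MeasurableSpace Om] (P : Measure Om) (B : ℝ → Om → ℝ)
  (T : ℕ → Om → ℝ≥0∞)

theorem filt_mono : Monotone (filt P B T) := fun s t h => by
  unfold filt
  refine sup_le_sup (sup_le_sup ?_ ?_) le_rfl <;>
    exact iSup_le fun u => le_iSup_of_le ⟨u.1, u.2.trans h⟩ le_rfl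

theorem isStopTime_filt (n : ℕ) : IsStopTime (filt P B T) (T n) := fun t => by
  have hle : MeasurableSpace.generateFrom {A | A = {ω | T n ω ≤ ENNReal.ofReal t}} ≤
      filt P B T t :=
    le_sup_of_le_left (le_sup_of_le_right (le_iSup_of_le ⟨t, le_rfl⟩ (le_iSup_of_le n le_rfl)))
  exact hle _ (MeasurableSpace.measurableSet_generateFrom rfl)

variable {P B T}

theorem nullMeasurableSet_of_measurableSet_filt (hB : ∀ t, Measurable (B t))
    (hT : ∀ n t, NullMeasurableSet {ω | T n ω ≤ ENNReal.ofReal t} P) (t : ℝ) (s : Set Om)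
    (hs : MeasurableSet[filt P B T t] s) : NullMeasurableSet s P := by
  suffices hle : filt P B T t ≤ (inferInstance : MeasurableSpace (NullMeasurableSpace Om P))
    from hle s hs
  refine sup_le (sup_le ?_ ?_) ?_
  · exact iSup_le fun u => measurable_iff_comap_le.1 (hB u.1).nullMeasurable
  · refine iSup_le fun u => iSup_le fun n => MeasurableSpace.generateFrom_le ?_
    rintro A (rfl : A = _)
    exact hT n u.1
  · exact MeasurableSpace.generateFrom_le fun A hA => NullMeasurableSet.of_null hA

end Filtration

section Values

variable {Om : Type*} [MeasurableSpace Om] {P : Measure Om} {β : ℝ} {g : ℝ → ℝ}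
  {Bpay Bfilt : ℝ → Om → ℝ} {T : ℕ → Om → ℝ≥0∞} {τ : Om → ℝ≥0∞}

theorem ValuesIn.stopBefore (hv : ValuesIn P T τ) (hT : ∀ᵐ ω ∂P, Monotone fun n => T n ω)
    (n : ℕ) : ValuesInLe P T (n + 1) (stopBefore τ (T (n + 1))) := by
  filter_upwards [hv, hT] with ω hvω hTω
  by_cases h : τ ω ≤ T (n + 1) ω
  · simp only [PoissonOS.stopBefore, if_pos h]
    rcases hvω with hτ | ⟨k, hk, hτk⟩
    · exact Or.inl hτ
    · rcases le_or_gt k (n + 1) with hkn | hkn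
      · exact Or.inr ⟨k, hk, hkn, hτk⟩
      · exact Or.inr ⟨n + 1, by omega, le_rfl, h.antisymm (hτk ▸ hTω hkn.le)⟩
  · simp [PoissonOS.stopBefore, h]

theorem stopVal_le_VvalN {n : ℕ} (hτ : IsStopTime (filt P Bfilt T) τ)
    (hv : ValuesInLe P T n τ) : stopVal P β g Bpay τ ≤ VvalN P β g Bpay Bfilt T n :=
  le_iSup₂_of_le τ hτ (le_iSup_of_le hv le_rfl)

theorem VvalN_le_Vval (n : ℕ) : VvalN P β g Bpay Bfilt T n ≤ Vval P β g Bpay Bfilt T :=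
  iSup₂_le fun τ hτ => iSup_le fun hv =>
    le_iSup₂_of_le τ hτ (le_iSup_of_le (hv.mono fun _ h => h.imp_right
      fun ⟨k, hk, _, hτk⟩ => ⟨k, hk, hτk⟩) le_rfl)

end Values

section EventTime

variable {Om : Type*} {th : ℝ → ℝ} {B : ℝ → Om → ℝ} {E : ℕ → Om → ℝ}

theorem iInf_ofReal_eq_iInf_rat {H : ℝ → ℝ≥0∞} (hH : Monotone H) (c : ℝ≥0∞) :
    ⨅ (t : ℝ) (_ : 0 ≤ t) (_ : c ≤ H t), ENNReal.ofReal t =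
      ⨅ (q : ℚ) (_ : 0 ≤ (q : ℝ)) (_ : c ≤ H q), ENNReal.ofReal q := by
  refine le_antisymm
    (le_iInf₂ fun q hq => le_iInf fun hc => iInf₂_le_of_le (q : ℝ) hq (iInf_le _ hc)) ?_
  refine le_iInf₂ fun t ht => le_iInf fun hct =>
    ENNReal.le_of_forall_pos_le_add fun ε hε _ => ?_
  obtain ⟨q, htq, hqε⟩ := exists_rat_btwn (lt_add_of_pos_right t (NNReal.coe_pos.2 hε))
  calc ⨅ (q : ℚ) (_ : 0 ≤ (q : ℝ)) (_ : c ≤ H q), ENNReal.ofReal q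
      ≤ ENNReal.ofReal q :=
        iInf₂_le_of_le q (ht.trans htq.le) (iInf_le _ (hct.trans (hH htq.le)))
    _ ≤ ENNReal.ofReal (t + ε) := ENNReal.ofReal_le_ofReal hqε.le
    _ = ENNReal.ofReal t + ε := by
        rw [ENNReal.ofReal_add ht ε.coe_nonneg, ENNReal.ofReal_coe_nnreal]

theorem haz_mono (ω : Om) : Monotone fun t => haz th B t ω :=
  fun _ _ h => lintegral_mono_set (Ioc_subset_Ioc_right h)

theorem eventTime_eq_iInf_rat (n : ℕ) (ω : Om) :
    eventTime th B E n ω = ⨅ (q : ℚ) (_ : 0 ≤ (q : ℝ))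
      (_ : ENNReal.ofReal (expSum E n ω) ≤ haz th B q ω), ENNReal.ofReal q :=
  iInf_ofReal_eq_iInf_rat (haz_mono ω) _

theorem eventTime_mono {ω : Om} (hE : ∀ k, 0 ≤ E k ω) :
    Monotone fun n => eventTime th B E n ω := fun m n hmn => by
  have hsum : expSum E m ω ≤ expSum E n ω :=
    Finset.sum_le_sum_of_subset_of_nonneg (Finset.range_subset_range.2 hmn) fun k _ _ => hE k
  exact iInf₂_mono fun t _ =>
    iInf_mono' fun hc => ⟨(ENNReal.ofReal_le_ofReal hsum).trans hc, le_rfl⟩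

variable [MeasurableSpace Om]

theorem measurable_haz (hB : Measurable (Function.uncurry B)) (hth : Measurable th) (t : ℝ) :
    Measurable (haz th B t) :=
  (ENNReal.measurable_ofReal.comp (hth.comp (hB.comp measurable_swap))).lintegral_prod_right'

theorem measurable_eventTime (hB : Measurable (Function.uncurry B)) (hth : Measurable th)
    (hE : ∀ k, Measurable (E k)) (n : ℕ) : Measurable (eventTime th B E n) := by
  simp only [funext (eventTime_eq_iInf_rat n), iInf_eq_if]
  refine Measurable.iInf fun q => Measurable.ite ?_ (Measurable.ite ?_ measurable_const
    measurable_const) measurable_const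
  · exact MeasurableSet.const _
  · exact measurableSet_le (ENNReal.measurable_ofReal.comp (Finset.measurable_sum _
      fun k _ => hE k)) (measurable_haz hB hth q)

theorem aemeasurable_eventTime {P : Measure Om} (hB : ∀ t, Measurable (B t))
    (hcont : ∀ᵐ ω ∂P, Continuous fun t => B t ω) (hth : Measurable th)
    (hE : ∀ k, Measurable (E k)) (n : ℕ) : AEMeasurable (eventTime th B E n) P := by
  obtain ⟨B', hB'm, hB'⟩ := exists_measurable_uncurry_ae_eq hB hcont
  refine ⟨eventTime th B' E n, measurable_eventTime hB'm hth hE n, ?_⟩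
  filter_upwards [hB'] with ω hω
  simp only [eventTime, haz, hω]

theorem IsExpSeq.ae_nonneg {P : Measure Om} [IsProbabilityMeasure P] {r : ℝ}
    (hE : IsExpSeq P E r B) : ∀ᵐ ω ∂P, ∀ k, 0 ≤ E k ω := by
  refine ae_all_iff.2 fun k => ?_
  have hpos : P {ω | 0 < E k ω} = 1 := by simpa using hE.law k 0 le_rfl
  have hmeas : NullMeasurableSet {ω | 0 < E k ω} P :=
    (measurableSet_lt measurable_const (hE.meas k)).nullMeasurableSet
  exact ((ae_iff_measure_eq hmeas).2 (by rw [hpos, measure_univ])).mono fun ω h => h.le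

end EventTime

theorem statement13_general {Om : Type*} [MeasurableSpace Om] (P : Measure Om) (W : ℝ → Om → ℝ)
    (β : ℝ) (th : ℝ → ℝ) (E : ℕ → Om → ℝ) (g : ℝ → ℝ)
    (hW : IsBM P W 0) (hE : IsExpSeq P E 1 W)
    (hthm : Measurable th) :
    ∀ x : ℝ,
      Vval P β g (fun t ω => x + W t ω) (fun t ω => x + W t ω)
          (eventTime th (fun t ω => x + W t ω) E) =
        ⨆ n : ℕ, VvalN P β g (fun t ω => x + W t ω) (fun t ω => x + W t ω)
          (eventTime th (fun t ω => x + W t ω) E) n := by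
  intro x
  have := hW.isProb
  set B : ℝ → Om → ℝ := fun t ω => x + W t ω
  set T := eventTime th B E
  have hB : ∀ t, Measurable (B t) := fun t => (hW.meas t).const_add x
  have hBcont : ∀ᵐ ω ∂P, Continuous fun t => B t ω := hW.cont.mono fun ω h => h.const_add x
  have hT : ∀ n t, NullMeasurableSet {ω | T n ω ≤ ENNReal.ofReal t} P := fun n t =>
    (aemeasurable_eventTime hB hBcont hthm hE.meas n).nullMeasurable measurableSet_Iic
  have hTmono : ∀ᵐ ω ∂P, Monotone fun n => T n ω := hE.ae_nonneg.mono fun ω => eventTime_mono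
  refine le_antisymm (iSup₂_le fun τ hτ => iSup_le fun hv => ?_) (iSup_le VvalN_le_Vval)
  have hcover : ∀ᵐ ω ∂P, payoff β g B τ ω ≠ 0 → ∃ n, τ ω ≤ T (n + 1) ω := by
    filter_upwards [hv] with ω hvω hne
    rcases hvω with hτ | ⟨k, hk, hτk⟩
    · simp [payoff, hτ] at hne
    · exact ⟨k - 1, by rw [Nat.sub_add_cancel hk, hτk]⟩
  calc stopVal P β g B τ
      = ⨆ n, ∫⁻ ω, {ω | τ ω ≤ T (n + 1) ω}.indicator (payoff β g B τ) ω ∂P :=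
        lintegral_eq_iSup_lintegral_indicator
          (fun n => hτ.nullMeasurableSet_le (nullMeasurableSet_of_measurableSet_filt hB hT)
            (isStopTime_filt P B T _))
          (hTmono.mono fun ω hω m n hmn h => h.trans (hω (by omega))) hcover
    _ = ⨆ n, stopVal P β g B (stopBefore τ (T (n + 1))) := by
        simp only [stopVal, payoff_stopBefore]
    _ ≤ ⨆ n, VvalN P β g B B T (n + 1) := iSup_mono fun n =>
        stopVal_le_VvalN (hτ.stopBefore (filt_mono P B T) (isStopTime_filt P B T _))
          (hv.stopBefore hTmono n)
    _ ≤ ⨆ n, VvalN P β g B B T n := iSup_le fun n => le_iSup (VvalN P β g B B T ·) (n + 1)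

/-- under the uniform integrability conditions on `g`, the value `V_θ` is the
increasing limit of the values `V^{(n)}_θ` of the problems restricted to the first `n`
event times. -/
theorem statement13 {Om : Type*} [MeasurableSpace Om] (P : Measure Om) (W : ℝ → Om → ℝ)
    (β : ℝ) (th : ℝ → ℝ) (E : ℕ → Om → ℝ) (g : ℝ → ℝ)
    (hβ : 0 < β) (hW : IsBM P W 0) (hE : IsExpSeq P E 1 W)
    (hthm : Measurable th) (hth0 : ∀ y, 0 ≤ th y)
    (hthloc : LocallyIntegrable th volume)
    (hgm : Measurable g) (hg0 : ∀ y : ℝ, 0 ≤ g y)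
    (hsup : ∀ x : ℝ, tailSup P β g (fun t ω => x + W t ω) 0 < ⊤)
    (htail : ∀ x : ℝ,
      Tendsto (fun t : ℝ => tailSup P β g (fun t' ω => x + W t' ω) t) atTop (nhds 0)) :
    ∀ x : ℝ,
      Vval P β g (fun t ω => x + W t ω) (fun t ω => x + W t ω)
          (eventTime th (fun t ω => x + W t ω) E) =
        ⨆ n : ℕ, VvalN P β g (fun t ω => x + W t ω) (fun t ω => x + W t ω)
          (eventTime th (fun t ω => x + W t ω) E) n :=
  statement13_general P W β th E g hW hE hthm

end PoissonOS
end
end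

section
/- Let $(B_t)_{t\ge0}$ be a standard one-dimensional Brownian motion started at $x\in\mathbb{R}$, let $\beta>0$ and $g(y)=\mathbf{1}_{\{y\in\mathbb{Q}\}}$. Then: (i) the classical optimal stopping value satisfies $w(x):=\sup_\tau\mathbb{E}^x[e^{-\beta\tau}\mathbf{1}_{\{B_\tau\in\mathbb{Q}\}}\mathbf{1}_{\{\tau<\infty\}}]=1$, where the supremum is over all stopping times $\tau$ of the (augmented) natural filtration of $B$; (ii) if $(E_k)_{k\ge1}$ are i.i.d. rate-$\lambda$ exponential random variables independent of $B$ and $T_n=E_1+\cdots+E_n$, then for every stopping time $\tau$ of the augmented filtration generated by $B$ and $N_t=\#\{n:T_n\le t\}$ with $\tau\in\{T_n:n\ge1\}\cup\{\infty\}$ almost surely, $\mathbb{E}^x[e^{-\beta\tau}\mathbf{1}_{\{B_\tau\in\mathbb{Q}\}}\mathbf{1}_{\{\tau<\infty\}}]=0$; hence the Poisson optimal stopping value is $V_\lambda(x)=0<w(x)$. -/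
open MeasureTheory ProbabilityTheory Real Set Filter
open scoped ENNReal NNReal

noncomputable section

namespace PoissonOS

/-- The augmented natural filtration of the process `B`. -/
def filtB {Om : Type*} [MeasurableSpace Om] (P : Measure Om) (B : ℝ → Om → ℝ)
    (t : ℝ) : MeasurableSpace Om :=
  (⨆ s : {s : ℝ // s ≤ t}, MeasurableSpace.comap (B s.1) inferInstance) ⊔ nullSets P

/-- Value of the classical optimal stopping problem: supremum over all stopping times
of the augmented natural filtration of `B`. -/
def wval {Om : Type*} [MeasurableSpace Om] (P : Measure Om) (β : ℝ) (g : ℝ → ℝ)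
    (B : ℝ → Om → ℝ) : ℝ≥0∞ :=
  ⨆ (τ : Om → ℝ≥0∞) (_ : IsStopTime (filtB P B) τ), stopVal P β g B τ

/-- The indicator function of the rationals. -/
def ratInd : ℝ → ℝ := Set.indicator (Set.range ((↑) : ℚ → ℝ)) fun _ => 1

/-!
(i) For rationals `a < x < b` and `t > 0`, the first time `B` hits `{a, b}`, capped at `t`, is a
stopping time of the augmented filtration, and the payoff at it is `e^{-βτ} ≥ e^{-βt}` as soon as
`B` leaves `(a, b)` before time `t`. The law of `B_t` has no atoms, so this happens with
probability close to `1` once `(a, b)` is a small interval around `x`; letting `t → 0` gives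
`w(x) = 1`.

(ii) Each `T_n`, `n ≥ 1`, is positive and independent of the path, while `B_s ∈ ℚ` has probability
zero for each fixed `s > 0`. By Fubini `B_{T_n}` is a.s. irrational, so a time with values in
`{T_n : n ≥ 1} ∪ {∞}` earns nothing.
-/

open Topology Metric

section Paths

variable {Ω β : Type*} [TopologicalSpace β] {u : ℝ → Ω → β} {s : Set β} {n m : ℝ} {ω : Ω}

lemma hittingBtwn_mem_of_continuous (hs : IsClosed s) (hu : Continuous (u · ω))
    (h : ∃ j ∈ Icc n m, u j ω ∈ s) :
    hittingBtwn u s n m ω ∈ Icc n m ∩ {i | u i ω ∈ s} := by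
  rw [hittingBtwn, if_pos h]
  obtain ⟨j, hj⟩ := h
  exact (isClosed_Icc.inter (hs.preimage hu)).csInf_mem ⟨j, hj⟩ ⟨n, fun i hi => hi.1.1⟩

lemma hittingBtwn_le_iff_of_continuous (hs : IsClosed s) (hu : Continuous (u · ω)) {i : ℝ}
    (hi : i < m) : hittingBtwn u s n m ω ≤ i ↔ ∃ j ∈ Icc n i, u j ω ∈ s := by
  constructor
  · intro hle
    by_cases h : ∃ j ∈ Icc n m, u j ω ∈ s
    · obtain ⟨⟨hn, -⟩, hmem⟩ := hittingBtwn_mem_of_continuous hs hu h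
      exact ⟨_, ⟨hn, hle⟩, hmem⟩
    · rw [hittingBtwn, if_neg h] at hle
      exact absurd hi hle.not_gt
  · rintro ⟨j, hj, hjs⟩
    exact (hittingBtwn_le_of_mem hj.1 (hj.2.trans hi.le) hjs).trans hj.2

end Paths

lemma exists_mem_pair_iff_not_mapsTo {f : ℝ → ℝ} (hf : Continuous f) {a b n u : ℝ}
    (hn : f n ∈ Ioo a b) :
    (∃ j ∈ Icc n u, f j ∈ ({a, b} : Set ℝ)) ↔ ¬ MapsTo f (Icc n u) (Ioo a b) := by
  constructor
  · rintro ⟨j, hj, hab⟩ hmaps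
    obtain ⟨ha, hb⟩ := hmaps hj
    rcases hab with h | h
    exacts [ha.ne' h, hb.ne h]
  · intro hmaps
    obtain ⟨j, hj, hjab⟩ := not_forall₂.1 hmaps
    rcases not_and_or.1 hjab with ha | hb
    · obtain ⟨s, hs, hfs⟩ := intermediate_value_Icc' hj.1 hf.continuousOn
        ⟨(not_lt.1 ha), hn.1.le⟩
      exact ⟨s, ⟨hs.1, hs.2.trans hj.2⟩, Or.inl hfs⟩
    · obtain ⟨s, hs, hfs⟩ := intermediate_value_Icc hj.1 hf.continuousOn
        ⟨hn.2.le, (not_lt.1 hb)⟩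
      exact ⟨s, ⟨hs.1, hs.2.trans hj.2⟩, Or.inr hfs⟩

lemma mapsTo_Ioo_iff_exists_mapsTo_Icc {X : Type*} [TopologicalSpace X] {f : X → ℝ}
    (hf : Continuous f) {K D : Set X} (hK : IsCompact K) (hDK : D ⊆ K) (hKD : K ⊆ closure D)
    {a b : ℝ} : MapsTo f K (Ioo a b) ↔
      ∃ k : ℕ, MapsTo f D (Icc (a + 1 / (k + 1)) (b - 1 / (k + 1))) := by
  constructor
  · intro hmaps
    rcases K.eq_empty_or_nonempty with rfl | hne
    · exact ⟨0, by rw [subset_empty_iff.1 hDK]; exact mapsTo_empty _ _⟩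
    obtain ⟨jmin, hjmin, hmin⟩ := hK.exists_isMinOn hne hf.continuousOn
    obtain ⟨jmax, hjmax, hmax⟩ := hK.exists_isMaxOn hne hf.continuousOn
    obtain ⟨k, hk⟩ := exists_nat_one_div_lt
      (lt_min (sub_pos.2 (hmaps hjmin).1) (sub_pos.2 (hmaps hjmax).2))
    refine ⟨k, fun j hj => ⟨?_, ?_⟩⟩
    · linarith [isMinOn_iff.1 hmin j (hDK hj), min_le_left (f jmin - a) (b - f jmax)]
    · linarith [isMaxOn_iff.1 hmax j (hDK hj), min_le_right (f jmin - a) (b - f jmax)]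
  · rintro ⟨k, hk⟩ j hj
    have hclosed := closure_minimal hk (isClosed_Icc.preimage hf) (hKD hj)
    exact ⟨by linarith [hclosed.1, show (0 : ℝ) < 1 / (k + 1) by positivity],
      by linarith [hclosed.2, show (0 : ℝ) < 1 / (k + 1) by positivity]⟩

def dyadicCeil (m : ℕ) (t : ℝ) : ℝ := ⌈t * 2 ^ m⌉ / 2 ^ m

lemma tendsto_dyadicCeil (t : ℝ) : Tendsto (dyadicCeil · t) atTop (𝓝 t) := by
  have hupper : Tendsto (fun m : ℕ => t + ((2 : ℝ) ^ m)⁻¹) atTop (𝓝 t) := by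
    simpa using tendsto_const_nhds.add (tendsto_inv_atTop_zero.comp
      (tendsto_pow_atTop_atTop_of_one_lt (one_lt_two : (1 : ℝ) < 2)))
  refine tendsto_of_tendsto_of_tendsto_of_le_of_le tendsto_const_nhds hupper (fun m => ?_)
    (fun m => ?_)
  · rw [dyadicCeil, le_div_iff₀ (by positivity)]
    exact Int.le_ceil _
  · rw [dyadicCeil, div_le_iff₀ (by positivity), add_mul, inv_mul_cancel₀ (by positivity)]
    exact (Int.ceil_lt_add_one _).le

lemma measurable_apply_dyadicCeil (m : ℕ) :
    Measurable fun p : ℝ × (ℝ → ℝ) => p.2 (dyadicCeil m p.1) := by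
  have hgrid : Measurable fun q : (ℝ → ℝ) × ℤ => q.1 (q.2 / 2 ^ m) :=
    measurable_from_prod_countable_left fun k => measurable_pi_apply ((k : ℝ) / 2 ^ m)
  exact hgrid.comp (measurable_snd.prodMk (measurable_fst.mul_const _).ceil)

lemma measurableSet_of_ae_eq_of_nullSets_le {Om : Type*} {m : MeasurableSpace Om}
    [MeasurableSpace Om] {P : Measure Om} (hm : nullSets P ≤ m)
    {A M : Set Om} (hM : MeasurableSet[m] M) (hAM : A =ᵐ[P] M) : MeasurableSet[m] A := by
  obtain ⟨hAM, hMA⟩ := ae_eq_set.1 hAM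
  have hnull : ∀ {N : Set Om}, P N = 0 → MeasurableSet[m] N := fun hN =>
    hm _ (MeasurableSpace.measurableSet_generateFrom hN)
  rw [← inter_union_sdiff A M, inter_comm, ← sdiff_sdiff_right_self]
  exact (hM.diff (hnull hMA)).union (hnull hAM)

lemma payoff_le_one {Om : Type*} {β : ℝ} {g : ℝ → ℝ} (hβ : 0 ≤ β) (hg : ∀ y, g y ≤ 1)
    (B : ℝ → Om → ℝ) (τ : Om → ℝ≥0∞) (ω : Om) : payoff β g B τ ω ≤ 1 := by
  refine indicator_apply_le' (fun _ => ENNReal.ofReal_le_one.2 ?_) (fun _ => zero_le)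
  have hexp : exp (-β * (τ ω).toReal) ≤ 1 :=
    exp_le_one_iff.2 (mul_nonpos_of_nonpos_of_nonneg (neg_nonpos.2 hβ) ENNReal.toReal_nonneg)
  nlinarith [exp_pos (-β * (τ ω).toReal), hg (B (τ ω).toReal ω)]

lemma payoff_of_lt_top {Om : Type*} {β : ℝ} {g : ℝ → ℝ} {B : ℝ → Om → ℝ} {τ : Om → ℝ≥0∞}
    {ω : Om} (hτ : τ ω < ⊤) :
    payoff β g B τ ω = ENNReal.ofReal (exp (-β * (τ ω).toReal) * g (B (τ ω).toReal ω)) :=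
  indicator_of_mem (show ω ∈ {ω' | τ ω' < ⊤} from hτ) _

lemma payoff_of_eq_top {Om : Type*} {β : ℝ} {g : ℝ → ℝ} {B : ℝ → Om → ℝ} {τ : Om → ℝ≥0∞}
    {ω : Om} (hτ : τ ω = ⊤) : payoff β g B τ ω = 0 :=
  indicator_of_notMem (show ω ∉ {ω' | τ ω' < ⊤} from fun h => h.ne hτ) _

lemma ratInd_le_one (y : ℝ) : ratInd y ≤ 1 :=
  indicator_apply_le' (fun _ => le_rfl) (fun _ => zero_le_one)

lemma measurable_expSum {Om : Type*} (E : ℕ → Om → ℝ) (n : ℕ) :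
    Measurable[⨆ k, MeasurableSpace.comap (E k) inferInstance] (expSum E n) :=
  Finset.measurable_sum _ fun k _ => measurable_iff_comap_le.2
    (le_iSup (fun k => MeasurableSpace.comap (E k) inferInstance) k)

section

variable {Om : Type*} [MeasurableSpace Om] {P : Measure Om}

lemma wval_le_one [IsProbabilityMeasure P] {β : ℝ} (hβ : 0 ≤ β) (B : ℝ → Om → ℝ) :
    wval P β ratInd B ≤ 1 :=
  iSup₂_le fun τ _ => (lintegral_mono (payoff_le_one hβ ratInd_le_one B τ)).trans_eq (by simp)

namespace IsBM

variable {B : ℝ → Om → ℝ} {x : ℝ}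

lemma map_eq_gaussianReal (hB : IsBM P B x) {t : ℝ} (ht : 0 ≤ t) :
    P.map (B t) = gaussianReal x t.toNNReal := by
  have hB_eq : B t =ᵐ[P] (x + ·) ∘ fun ω => B t ω - B 0 ω := by
    filter_upwards [hB.init] with ω hω
    simp [hω]
  have hincr : Measurable fun ω => B t ω - B 0 ω := (hB.meas t).sub (hB.meas 0)
  rw [Measure.map_congr hB_eq, ← Measure.map_map (measurable_const_add x) hincr,
    hB.gauss 0 t le_rfl ht, sub_zero, gaussianReal_map_const_add, zero_add]

lemma measure_preimage_eq_zero (hB : IsBM P B x) {t : ℝ} (ht : 0 < t) {N : Set ℝ}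
    (hN : volume N = 0) : P {ω | B t ω ∈ N} = 0 := by
  refine nonpos_iff_eq_zero.1 ((Measure.le_map_apply (hB.meas t).aemeasurable N).trans_eq ?_)
  rw [hB.map_eq_gaussianReal ht.le]
  exact gaussianReal_absolutelyContinuous x (Real.toNNReal_pos.2 ht).ne' hN

lemma isStopTime_hittingBtwn_pair (hB : IsBM P B x) {a b t : ℝ} (ha : a < x) (hb : x < b)
    (ht : 0 < t) : IsStopTime (filtB P B) fun ω => ENNReal.ofReal (hittingBtwn B {a, b} 0 t ω) := by
  intro u
  rcases le_or_gt t u with htu | hut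
  · convert MeasurableSet.univ (m := filtB P B u)
    exact eq_univ_of_forall fun ω => ENNReal.ofReal_le_ofReal ((hittingBtwn_le ω).trans htu)
  -- off the null set of bad paths, `{τ ≤ u}` is decided by the path on a countable dense subset
  -- of `[0, u]`; the augmentation by null sets absorbs the difference
  obtain ⟨D, hDI, hDc, hID⟩ :=
    (TopologicalSpace.IsSeparable.of_separableSpace (Icc (0 : ℝ) u)).exists_countable_dense_subset
  set C : ℕ → Set ℝ := fun k => Icc (a + 1 / (k + 1)) (b - 1 / (k + 1))
  refine measurableSet_of_ae_eq_of_nullSets_le le_sup_right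
    (M := (⋃ k, ⋂ j ∈ D, B j ⁻¹' C k)ᶜ) ?_ ?_
  · refine (MeasurableSet.iUnion fun k => MeasurableSet.biInter hDc fun j hj => ?_).compl
    have hj : MeasurableSpace.comap (B j) inferInstance ≤ filtB P B u :=
      le_sup_of_le_left (le_iSup_of_le (⟨j, (hDI hj).2⟩ : {s : ℝ // s ≤ u}) le_rfl)
    exact hj _ ⟨_, measurableSet_Icc, rfl⟩
  · rw [eventuallyEq_set]
    filter_upwards [hB.cont, hB.init] with ω hc h0
    have hx : B 0 ω ∈ Ioo a b := by rw [h0]; exact ⟨ha, hb⟩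
    -- `ofReal` sends every `u ≤ 0` to `0`, so `{τ ≤ ofReal u}` matches `{hit by time u}` only
    -- because the path starts strictly inside `(a, b)`
    have hpos : 0 < hittingBtwn B {a, b} 0 t ω := by
      by_contra! hle
      obtain ⟨j, hj, hjab⟩ := (hittingBtwn_le_iff_of_continuous (toFinite _).isClosed hc ht).1 hle
      obtain rfl : j = 0 := le_antisymm hj.2 hj.1
      rcases hjab with h | h
      exacts [hx.1.ne' h, hx.2.ne h]
    simp only [mem_compl_iff, mem_iUnion, mem_iInter, mem_preimage]
    rw [ENNReal.ofReal_le_ofReal_iff', or_iff_left hpos.not_ge,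
      hittingBtwn_le_iff_of_continuous (toFinite _).isClosed hc hut,
      exists_mem_pair_iff_not_mapsTo hc hx,
      mapsTo_Ioo_iff_exists_mapsTo_Icc hc isCompact_Icc hDI hID]
    rfl

lemma exp_mul_measure_le_stopVal_hittingBtwn (hB : IsBM P B x) {β : ℝ} (hβ : 0 ≤ β)
    {g : ℝ → ℝ} {a b t : ℝ} (ha : a < x) (hb : x < b) (hg : ∀ y ∈ ({a, b} : Set ℝ), g y = 1)
    (ht : 0 ≤ t) :
    ENNReal.ofReal (exp (-β * t)) * P {ω | B t ω ∉ Ioo a b} ≤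
      stopVal P β g B fun ω => ENNReal.ofReal (hittingBtwn B {a, b} 0 t ω) := by
  set τ : Om → ℝ≥0∞ := fun ω => ENNReal.ofReal (hittingBtwn B {a, b} 0 t ω)
  have hexit : MeasurableSet {ω | B t ω ∉ Ioo a b} := (hB.meas t measurableSet_Ioo).compl
  rw [stopVal, ← lintegral_indicator_const hexit]
  refine lintegral_mono_ae ?_
  filter_upwards [hB.cont, hB.init] with ω hc h0
  by_cases hω : ω ∈ {ω | B t ω ∉ Ioo a b}
  · have hx : B 0 ω ∈ Ioo a b := by rw [h0]; exact ⟨ha, hb⟩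
    have hhit : ∃ j ∈ Icc 0 t, B j ω ∈ ({a, b} : Set ℝ) :=
      (exists_mem_pair_iff_not_mapsTo hc hx).2 fun hmaps => hω (hmaps ⟨ht, le_rfl⟩)
    obtain ⟨⟨h0τ, hτt⟩, hτab⟩ := hittingBtwn_mem_of_continuous (toFinite _).isClosed hc hhit
    rw [indicator_of_mem hω, payoff_of_lt_top (τ := τ) ENNReal.ofReal_lt_top]
    simp only [τ, ENNReal.toReal_ofReal h0τ, hg _ hτab, mul_one]
    exact ENNReal.ofReal_le_ofReal (exp_le_exp.2 (by nlinarith))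
  · rw [indicator_of_notMem hω]
    exact zero_le

lemma exp_le_wval (hB : IsBM P B x) {β : ℝ} (hβ : 0 ≤ β) {t : ℝ} (ht : 0 < t) :
    ENNReal.ofReal (exp (-β * t)) ≤ wval P β ratInd B := by
  have := hB.isProb
  set ν := P.map (B t)
  have hνx : ν {x} = 0 := by
    rw [Measure.map_apply (hB.meas t) (measurableSet_singleton x)]
    exact hB.measure_preimage_eq_zero ht Real.volume_singleton
  have hball : Tendsto (fun δ => ν (closedBall x δ)) (𝓝[>] 0) (𝓝 0) := by
    have h := tendsto_measure_biInter_gt (μ := ν) (s := closedBall x) (a := 0)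
      (fun r _ => measurableSet_closedBall.nullMeasurableSet)
      (fun _ _ _ hij => closedBall_subset_closedBall hij) ⟨1, one_pos, measure_ne_top _ _⟩
    rwa [biInter_gt_closedBall, closedBall_zero, hνx] at h
  have hbound : ∀ δ > 0, ENNReal.ofReal (exp (-β * t)) * (1 - ν (closedBall x δ)) ≤
      wval P β ratInd B := by
    intro δ hδ
    obtain ⟨a, hxa, hax⟩ := exists_rat_btwn (sub_lt_self x hδ)
    obtain ⟨b, hxb, hbx⟩ := exists_rat_btwn (lt_add_of_pos_right x hδ)
    have hab : Ioo (a : ℝ) b ⊆ closedBall x δ := by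
      rw [Real.closedBall_eq_Icc]
      exact Ioo_subset_Icc_self.trans (Icc_subset_Icc hxa.le hbx.le)
    have hg : ∀ y ∈ ({(a : ℝ), (b : ℝ)} : Set ℝ), ratInd y = 1 := by
      rintro y (rfl | rfl | _) <;> exact indicator_of_mem (mem_range_self _) _
    calc ENNReal.ofReal (exp (-β * t)) * (1 - ν (closedBall x δ))
        = ENNReal.ofReal (exp (-β * t)) * P {ω | B t ω ∉ closedBall x δ} := by
          rw [Measure.map_apply (hB.meas t) measurableSet_closedBall,
            ← prob_compl_eq_one_sub (hB.meas t measurableSet_closedBall)]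
          rfl
      _ ≤ ENNReal.ofReal (exp (-β * t)) * P {ω | B t ω ∉ Ioo (a : ℝ) b} :=
          mul_le_mul_right (measure_mono fun _ hω => mt (@hab _) hω) _
      _ ≤ wval P β ratInd B :=
          (exp_mul_measure_le_stopVal_hittingBtwn hB hβ hax hxb hg ht.le).trans
            (le_iSup₂_of_le _ (hB.isStopTime_hittingBtwn_pair hax hxb ht) le_rfl)
  have hlim : Tendsto (fun δ => ENNReal.ofReal (exp (-β * t)) * (1 - ν (closedBall x δ)))
      (𝓝[>] 0) (𝓝 (ENNReal.ofReal (exp (-β * t)))) := by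
    simpa using ENNReal.Tendsto.const_mul
      (ENNReal.Tendsto.sub tendsto_const_nhds hball (Or.inl ENNReal.one_ne_top))
      (Or.inr ENNReal.ofReal_ne_top)
  exact le_of_tendsto hlim (eventually_nhdsWithin_of_forall hbound)

lemma one_le_wval (hB : IsBM P B x) {β : ℝ} (hβ : 0 ≤ β) : 1 ≤ wval P β ratInd B := by
  have hlim : Tendsto (fun t => ENNReal.ofReal (exp (-β * t))) (𝓝[>] 0) (𝓝 1) := by
    have hcont : Continuous fun t => ENNReal.ofReal (exp (-β * t)) :=
      ENNReal.continuous_ofReal.comp (by fun_prop)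
    simpa using (hcont.tendsto 0).mono_left nhdsWithin_le_nhds
  exact le_of_tendsto hlim (eventually_nhdsWithin_of_forall fun t ht => exp_le_wval hB hβ ht)

end IsBM

lemma ae_apply_notMem_of_indep [IsFiniteMeasure P] {B : ℝ → Om → ℝ} {S : Om → ℝ} {N : Set ℝ}
    (hN : N.Countable) (hB : ∀ t, Measurable (B t))
    (hcont : ∀ᵐ ω ∂P, Continuous fun t => B t ω) (hS : Measurable S)
    (hind : Indep (MeasurableSpace.comap S inferInstance) (pathSigma B) P)
    (hnull : ∀ᵐ t ∂P.map S, P {ω | B t ω ∈ N} = 0) : ∀ᵐ ω ∂P, B (S ω) ω ∉ N := by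
  set Φ : Om → ℝ → ℝ := fun ω t => B t ω
  have hΦpath : MeasurableSpace.comap Φ MeasurableSpace.pi = pathSigma B := by
    simp only [MeasurableSpace.pi, MeasurableSpace.comap_iSup, MeasurableSpace.comap_comp]
    rfl
  have hΦ : Measurable Φ := measurable_iff_comap_le.2 (hΦpath ▸ iSup_le fun t => (hB t).comap_le)
  have hlaw : P.map (fun ω => (S ω, Φ ω)) = (P.map S).prod (P.map Φ) :=
    (indepFun_iff_map_prod_eq_prod_map_map hS.aemeasurable hΦ.aemeasurable).1
      (indep_of_indep_of_le_right hind hΦpath.le)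
  -- jointly measurable in `(t, f)`, and equal to `{(t, f) | f t ∈ N}` when `f` is continuous
  set A : Set (ℝ × (ℝ → ℝ)) :=
    ⋃ q ∈ N, {p | Tendsto (fun m => p.2 (dyadicCeil m p.1)) atTop (𝓝 q)}
  have hA : MeasurableSet A := MeasurableSet.biUnion hN fun q _ =>
    measurableSet_tendsto _ fun m => measurable_apply_dyadicCeil m
  have hmemA : ∀ ω, Continuous (Φ ω) → ∀ t, (t, Φ ω) ∈ A ↔ B t ω ∈ N := by
    intro ω hc t
    have hlim := (hc.tendsto t).comp (tendsto_dyadicCeil t)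
    simp only [A, mem_iUnion, mem_ofPred_eq]
    exact ⟨fun ⟨q, hq, hlim'⟩ => (tendsto_nhds_unique hlim hlim' : B t ω = q) ▸ hq,
      fun h => ⟨_, h, hlim⟩⟩
  have hslice : ∀ᵐ t ∂P.map S, P.map Φ (Prod.mk t ⁻¹' A) = 0 := by
    filter_upwards [hnull] with t ht
    rw [Measure.map_apply hΦ (measurable_prodMk_left hA), measure_eq_zero_iff_ae_notMem]
    filter_upwards [hcont, measure_eq_zero_iff_ae_notMem.1 ht] with ω hc hω hA
    exact hω ((hmemA ω hc t).1 hA)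
  have hA0 : P ((fun ω => (S ω, Φ ω)) ⁻¹' A) = 0 := by
    rw [← Measure.map_apply (hS.prodMk hΦ) hA, hlaw, Measure.prod_apply hA,
      lintegral_congr_ae hslice, lintegral_zero]
  filter_upwards [hcont, measure_eq_zero_iff_ae_notMem.1 hA0] with ω hc hω hN
  exact hω ((hmemA ω hc _).2 hN)

namespace IsExpSeq

variable {E : ℕ → Om → ℝ} {r : ℝ} {B : ℝ → Om → ℝ}

lemma ae_pos [IsProbabilityMeasure P] (hE : IsExpSeq P E r B) (k : ℕ) :
    ∀ᵐ ω ∂P, 0 < E k ω := by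
  rw [ae_iff_measure_eq (measurableSet_lt measurable_const (hE.meas k)).nullMeasurableSet]
  simpa using hE.law k 0 le_rfl

lemma ae_expSum_pos [IsProbabilityMeasure P] (hE : IsExpSeq P E r B) {n : ℕ} (hn : n ≠ 0) :
    ∀ᵐ ω ∂P, 0 < expSum E n ω := by
  filter_upwards [ae_all_iff.2 hE.ae_pos] with ω hω
  exact Finset.sum_pos (fun k _ => hω k) (Finset.nonempty_range_iff.2 hn)

lemma ae_ratInd_expSum_eq_zero {x : ℝ} (hB : IsBM P B x) (hE : IsExpSeq P E r B) {n : ℕ}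
    (hn : n ≠ 0) : ∀ᵐ ω ∂P, ratInd (B (expSum E n ω) ω) = 0 := by
  have := hB.isProb
  have hS := (measurable_expSum E n).mono (iSup_le fun k => (hE.meas k).comap_le) le_rfl
  have hpos := (ae_map_iff hS.aemeasurable measurableSet_Ioi).2 (hE.ae_expSum_pos hn)
  filter_upwards [ae_apply_notMem_of_indep (countable_range ((↑) : ℚ → ℝ)) hB.meas hB.cont hS
    (indep_of_indep_of_le_left hE.indep (measurable_expSum E n).comap_le)
    (hpos.mono fun t ht => hB.measure_preimage_eq_zero ht
      ((countable_range _).measure_zero volume))] with ω hω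
  exact indicator_of_notMem hω _

lemma stopVal_eq_zero {x β : ℝ} (hB : IsBM P B x) (hE : IsExpSeq P E r B) {τ : Om → ℝ≥0∞}
    (hτ : ValuesIn P (fun n ω => ENNReal.ofReal (expSum E n ω)) τ) :
    stopVal P β ratInd B τ = 0 := by
  have := hB.isProb
  have hirr : ∀ᵐ ω ∂P, ∀ n, n ≠ 0 → ratInd (B (expSum E n ω) ω) = 0 :=
    ae_all_iff.2 fun n => eventually_imp_distrib_left.2 (hE.ae_ratInd_expSum_eq_zero hB)
  have hpos : ∀ᵐ ω ∂P, ∀ n, n ≠ 0 → 0 < expSum E n ω :=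
    ae_all_iff.2 fun n => eventually_imp_distrib_left.2 hE.ae_expSum_pos
  have hpay : ∀ᵐ ω ∂P, payoff β ratInd B τ ω = 0 := by
    filter_upwards [hτ, hirr, hpos] with ω hτω hirr hpos
    rcases hτω with htop | ⟨n, hn, hτn⟩
    · exact payoff_of_eq_top htop
    · rw [payoff_of_lt_top (hτn ▸ ENNReal.ofReal_lt_top), hτn,
        ENNReal.toReal_ofReal (hpos n (by omega)).le, hirr n (by omega), mul_zero,
        ENNReal.ofReal_zero]
  rw [stopVal, lintegral_congr_ae (g := fun _ => 0) hpay, lintegral_zero]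

end IsExpSeq

end

theorem statement18_general {Om : Type*} [MeasurableSpace Om] (P : Measure Om) (B : ℝ → Om → ℝ)
    (x β lam : ℝ) (E : ℕ → Om → ℝ)
    (hβ : 0 < β) (hB : IsBM P B x) (hE : IsExpSeq P E lam B) :
    wval P β ratInd B = 1 ∧
    (∀ τ : Om → ℝ≥0∞,
      IsStopTime (filt P B (fun n ω => ENNReal.ofReal (expSum E n ω))) τ →
      ValuesIn P (fun n ω => ENNReal.ofReal (expSum E n ω)) τ →
      stopVal P β ratInd B τ = 0) ∧
    Vval P β ratInd B B (fun n ω => ENNReal.ofReal (expSum E n ω)) = 0 := by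
  have := hB.isProb
  refine ⟨le_antisymm (wval_le_one hβ.le B) (hB.one_le_wval hβ.le),
    fun τ _ hτ => hE.stopVal_eq_zero hB hτ, ?_⟩
  simp only [Vval, ENNReal.iSup_eq_zero]
  exact fun τ _ hτ => hE.stopVal_eq_zero hB hτ

/-- for the payoff `g = 1_ℚ`, the classical optimal stopping value is
`w(x) = 1`, while every stopping time taking values in the event times of an independent
rate-`λ` Poisson process has zero expected payoff, so the Poisson stopping value is
`V_λ(x) = 0 < w(x)`. -/
theorem statement18 {Om : Type*} [MeasurableSpace Om] (P : Measure Om) (B : ℝ → Om → ℝ)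
    (x β lam : ℝ) (E : ℕ → Om → ℝ)
    (hβ : 0 < β) (hlam : 0 < lam) (hB : IsBM P B x) (hE : IsExpSeq P E lam B) :
    wval P β ratInd B = 1 ∧
    (∀ τ : Om → ℝ≥0∞,
      IsStopTime (filt P B (fun n ω => ENNReal.ofReal (expSum E n ω))) τ →
      ValuesIn P (fun n ω => ENNReal.ofReal (expSum E n ω)) τ →
      stopVal P β ratInd B τ = 0) ∧
    Vval P β ratInd B B (fun n ω => ENNReal.ofReal (expSum E n ω)) = 0 :=
  statement18_general P B x β lam E hβ hB hE

end PoissonOS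
end
end
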